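/- arXiv:2102.13151 — 9 statements merged into one kernel-verified Lean document; each statement's English description precedes it below -/
import Mathlib

section
/- Let B be a symmetric N×N infection rate matrix with an equitable partition π = {N_1,...,N_r}, and suppose the curing rates satisfy δ_i = δ_j whenever nodes i and j lie in the same cell. Let v : [0,∞) → ℝ^N be a solution of NIMFA with v_i(0) = v_j(0) whenever i and j lie in the same cell. Then v_i(t) = v_j(t) for all t ≥ 0 and all nodes i,j in the same cell; moreover, picking a representative node i_l in each cell N_l, the reduced-size vector v^π(t) = (v_{i_1}(t),...,v_{i_r}(t))ᵀ satisfies dv^π(t)/dt = -S^π v^π(t) + diag(u_r - v^π(t)) B^π v^π(t), where S^π = diag(δ_{i_1},...,δ_{i_r}), B^π is the quotient matrix and u_r is the r×1 all-one vector. -/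
/-!
Let `π = rep ∘ c` send each node to the representative of its cell and put
`e(t) = v(t) - v(t) ∘ π`. Equitability makes `B (x ∘ π)` constant on cells, so `e` solves the
linear equation `e' = -δ e - e · (B v) ∘ π + (1 - v) · (B - B_π) e`, where `B_π` has rows
`B (π i)`. Its coefficients are bounded on `[0, T]` because `v` is continuous, so Grönwall's
inequality and `e(0) = 0` give `e ≡ 0`. Once `v(t)` is constant on cells, `(B v(t))` at a
representative is `B^π v^π(t)`.
-/

open Matrix Finset
open scoped Matrix.Norms.Operator

namespace Matrix

variable {ι κ α : Type*} [Fintype ι] [DecidableEq κ] [NonUnitalNonAssocSemiring α]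

def IsEquitable (B : Matrix ι ι α) (c : ι → κ) : Prop :=
  ∀ i j, c i = c j → ∀ l : κ,
    ∑ k ∈ univ.filter (fun k => c k = l), B i k = ∑ k ∈ univ.filter (fun k => c k = l), B j k

theorem mulVec_comp_apply [Fintype κ] (B : Matrix ι ι α) (c : ι → κ) (y : κ → α) (i : ι) :
    (B *ᵥ (y ∘ c)) i = ∑ l, (∑ k ∈ univ.filter (fun k => c k = l), B i k) * y l := by
  rw [mulVec, dotProduct, ← sum_fiberwise univ c]
  refine sum_congr rfl fun l _ => ?_
  rw [sum_mul]
  refine sum_congr rfl fun k hk => ?_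
  rw [Function.comp_apply, (mem_filter.1 hk).2]

theorem IsEquitable.mulVec_comp_apply_eq [Fintype κ] {B : Matrix ι ι α} {c : ι → κ}
    (hB : B.IsEquitable c) (y : κ → α) {i j : ι} (hij : c i = c j) :
    (B *ᵥ (y ∘ c)) i = (B *ᵥ (y ∘ c)) j := by
  simp only [mulVec_comp_apply, hB i j hij]

theorem submatrix_id_mulVec_apply {l : Type*} (A : Matrix ι ι α) (f : l → ι) (x : ι → α)
    (a : l) : (A.submatrix f id *ᵥ x) a = (A *ᵥ x) (f a) :=
  rfl

end Matrix

section NIMFA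

variable {ι κ : Type*} [Fintype ι] [Fintype κ] [DecidableEq κ]

def nimfaField (δ : ι → ℝ) (B : Matrix ι ι ℝ) (x : ι → ℝ) : ι → ℝ :=
  fun i => -δ i * x i + (1 - x i) * (B *ᵥ x) i

variable {δ : ι → ℝ} {B : Matrix ι ι ℝ} {c : ι → κ} {rep : κ → ι}

theorem nimfaField_sub_comp (hrep : ∀ l, c (rep l) = l) (hB : B.IsEquitable c)
    (hδ : ∀ i j, c i = c j → δ i = δ j) (x : ι → ℝ) :
    nimfaField δ B x - nimfaField δ B x ∘ (rep ∘ c) =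
      -δ * (x - x ∘ (rep ∘ c)) - (x - x ∘ (rep ∘ c)) * (B.submatrix (rep ∘ c) id *ᵥ x)
        + (1 - x) * ((B - B.submatrix (rep ∘ c) id) *ᵥ (x - x ∘ (rep ∘ c))) := by
  ext i
  have hci : c i = c (rep (c i)) := (hrep (c i)).symm
  have hcell : (B *ᵥ (x ∘ (rep ∘ c))) i = (B *ᵥ (x ∘ (rep ∘ c))) (rep (c i)) :=
    hB.mulVec_comp_apply_eq (x ∘ rep) hci
  simp only [nimfaField, sub_mulVec, mulVec_sub, Pi.add_apply, Pi.sub_apply, Pi.mul_apply,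
    Pi.neg_apply, Pi.one_apply, Function.comp_apply, submatrix_id_mulVec_apply, hδ _ _ hci]
  rw [hcell]
  ring

theorem norm_nimfaField_sub_comp_le (hrep : ∀ l, c (rep l) = l) (hB : B.IsEquitable c)
    (hδ : ∀ i j, c i = c j → δ i = δ j) {x : ι → ℝ} {M : ℝ} (hx : ‖x‖ ≤ M) :
    ‖nimfaField δ B x - nimfaField δ B x ∘ (rep ∘ c)‖ ≤
      (‖δ‖ + ‖B.submatrix (rep ∘ c) id‖ * M
          + (‖(1 : ι → ℝ)‖ + M) * ‖B - B.submatrix (rep ∘ c) id‖) * ‖x - x ∘ (rep ∘ c)‖ := by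
  rw [nimfaField_sub_comp hrep hB hδ]
  set e := x - x ∘ (rep ∘ c)
  set P := B.submatrix (rep ∘ c) id
  have hδe : ‖-δ * e‖ ≤ ‖δ‖ * ‖e‖ := by simpa only [norm_neg] using norm_mul_le (-δ) e
  have hPx : ‖e * (P *ᵥ x)‖ ≤ ‖P‖ * M * ‖e‖ :=
    calc ‖e * (P *ᵥ x)‖ ≤ ‖e‖ * (‖P‖ * ‖x‖) :=
          (norm_mul_le _ _).trans (by gcongr; exact linfty_opNorm_mulVec P x)
      _ ≤ ‖P‖ * M * ‖e‖ := by rw [mul_comm]; gcongr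
  have hDe : ‖(1 - x) * ((B - P) *ᵥ e)‖ ≤ (‖(1 : ι → ℝ)‖ + M) * ‖B - P‖ * ‖e‖ :=
    calc ‖(1 - x) * ((B - P) *ᵥ e)‖ ≤ ‖1 - x‖ * (‖B - P‖ * ‖e‖) :=
          (norm_mul_le _ _).trans (by gcongr; exact linfty_opNorm_mulVec _ e)
      _ ≤ (‖(1 : ι → ℝ)‖ + M) * (‖B - P‖ * ‖e‖) := by
          gcongr; exact (norm_sub_le _ _).trans (by gcongr)
      _ = _ := by ring
  calc _ ≤ ‖-δ * e‖ + ‖e * (P *ᵥ x)‖ + ‖(1 - x) * ((B - P) *ᵥ e)‖ :=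
        (norm_add_le _ _).trans (by gcongr; exact norm_sub_le _ _)
    _ ≤ _ := by linarith

theorem nimfa_comp_rep_eq (hrep : ∀ l, c (rep l) = l) (hB : B.IsEquitable c)
    (hδ : ∀ i j, c i = c j → δ i = δ j) {v : ℝ → ι → ℝ}
    (hsol : ∀ t, 0 ≤ t → HasDerivAt v (nimfaField δ B (v t)) t)
    (hinit : v 0 ∘ (rep ∘ c) = v 0) {T : ℝ} (hT : 0 ≤ T) : v T ∘ (rep ∘ c) = v T := by
  obtain ⟨M, hM⟩ := isCompact_Icc.exists_bound_of_continuousOn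
    fun t (ht : t ∈ Set.Icc 0 T) => (hsol t ht.1).continuousAt.continuousWithinAt
  have hdev : ∀ t, 0 ≤ t → HasDerivAt (fun s => v s - v s ∘ (rep ∘ c))
      (nimfaField δ B (v t) - nimfaField δ B (v t) ∘ (rep ∘ c)) t := fun t ht =>
    (hsol t ht).sub (hasDerivAt_pi.2 fun i => hasDerivAt_pi.1 (hsol t ht) (rep (c i)))
  have hdev_zero := eq_zero_of_abs_deriv_le_mul_abs_self_of_eq_zero_right
    (fun t ht => (hdev t ht.1).continuousAt.continuousWithinAt)
    (fun t ht => (hdev t ht.1).hasDerivWithinAt) (sub_eq_zero.2 hinit.symm)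
    (fun t ht => norm_nimfaField_sub_comp_le hrep hB hδ (hM t (Set.Ico_subset_Icc_self ht)))
    T ⟨hT, le_rfl⟩
  exact (sub_eq_zero.1 hdev_zero).symm

end NIMFA

theorem nimfa_equitable_partition_reduction_general
    {N r : ℕ} (B : Matrix (Fin N) (Fin N) ℝ) (δ : Fin N → ℝ)
    (c : Fin N → Fin r) (rep : Fin r → Fin N)
    (hrep : ∀ l, c (rep l) = l)
    (hequitable : ∀ i j, c i = c j → ∀ l : Fin r,
      ∑ k ∈ univ.filter (fun k => c k = l), B i k
        = ∑ k ∈ univ.filter (fun k => c k = l), B j k)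
    (hδ_cell : ∀ i j, c i = c j → δ i = δ j)
    (v : ℝ → Fin N → ℝ)
    (hsol : ∀ t : ℝ, 0 ≤ t → ∀ i, HasDerivAt (fun s => v s i)
      (-δ i * v t i + (1 - v t i) * ∑ j, B i j * v t j) t)
    (hinit : ∀ i j, c i = c j → v 0 i = v 0 j) :
    (∀ t : ℝ, 0 ≤ t → ∀ i j, c i = c j → v t i = v t j) ∧
    (∀ t : ℝ, 0 ≤ t → ∀ p : Fin r,
      HasDerivAt (fun s => v s (rep p))
        (-δ (rep p) * v t (rep p) + (1 - v t (rep p)) *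
          ∑ l : Fin r,
            (∑ k ∈ univ.filter (fun k => c k = l), B (rep p) k) * v t (rep l)) t) := by
  have hcell : ∀ t, 0 ≤ t → v t ∘ (rep ∘ c) = v t :=
    fun _ ht => nimfa_comp_rep_eq hrep hequitable hδ_cell
      (fun s hs => hasDerivAt_pi.2 (hsol s hs)) (funext fun i => hinit _ _ (hrep (c i))) ht
  refine ⟨fun t ht i j hij => ?_, fun t ht p => ?_⟩
  · rw [← congrFun (hcell t ht) i, ← congrFun (hcell t ht) j]
    simp only [Function.comp_apply, hij]
  · have hsum : (B *ᵥ v t) (rep p)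
        = ∑ l, (∑ k ∈ univ.filter (fun k => c k = l), B (rep p) k) * v t (rep l) := by
      conv_lhs => rw [← hcell t ht]
      exact mulVec_comp_apply B c (v t ∘ rep) (rep p)
    convert hsol t ht (rep p) using 3
    exact hsum.symm

/-- **Theorem 1, reduction of NIMFA by an equitable partition.**
The partition of the node set `{1,...,N}` into `r` cells is encoded by the cell-assignment
map `c : Fin N → Fin r`; the cells are nonempty since each has a representative `rep l`.
If `B` is symmetric with an equitable partition, the curing rates are constant on cells and
the initial viral states agree within cells, then the viral states agree within cells for all
`t ≥ 0`, and the reduced-size vector `v^π(t) = (v_{rep 1}(t),...,v_{rep r}(t))` solves the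
reduced NIMFA system with the quotient matrix `B^π`. -/
theorem nimfa_equitable_partition_reduction
    {N r : ℕ} (B : Matrix (Fin N) (Fin N) ℝ) (δ : Fin N → ℝ)
    (c : Fin N → Fin r) (rep : Fin r → Fin N)
    (hrep : ∀ l, c (rep l) = l)
    (hB_symm : B.IsSymm)
    (hB_nonneg : ∀ i j, 0 ≤ B i j)
    (hδ_pos : ∀ i, 0 < δ i)
    (hequitable : ∀ i j, c i = c j → ∀ l : Fin r,
      ∑ k ∈ univ.filter (fun k => c k = l), B i k
        = ∑ k ∈ univ.filter (fun k => c k = l), B j k)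
    (hδ_cell : ∀ i j, c i = c j → δ i = δ j)
    (v : ℝ → Fin N → ℝ)
    (hsol : ∀ t : ℝ, 0 ≤ t → ∀ i, HasDerivAt (fun s => v s i)
      (-δ i * v t i + (1 - v t i) * ∑ j, B i j * v t j) t)
    (hinit : ∀ i j, c i = c j → v 0 i = v 0 j) :
    (∀ t : ℝ, 0 ≤ t → ∀ i j, c i = c j → v t i = v t j) ∧
    (∀ t : ℝ, 0 ≤ t → ∀ p : Fin r,
      HasDerivAt (fun s => v s (rep p))
        (-δ (rep p) * v t (rep p) + (1 - v t (rep p)) *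
          ∑ l : Fin r,
            (∑ k ∈ univ.filter (fun k => c k = l), B (rep p) k) * v t (rep l)) t) :=
  nimfa_equitable_partition_reduction_general B δ c rep hrep hequitable hδ_cell v hsol hinit
end

section
/- Suppose the N×N infection rate matrix B is symmetric and irreducible with nonnegative entries, S = diag(δ_1,...,δ_N) has positive diagonal, and V ⊆ ℝ^N is an m-dimensional invariant set of NIMFA with S v ∈ V for every v ∈ V. Let P_V and P_{V⊥} = I - P_V be the orthogonal projections onto V and its orthogonal complement V⊥. Then B decomposes as B = B_V + B_{V⊥} with B_V = P_V B P_V and B_{V⊥} = P_{V⊥} B P_{V⊥}; equivalently, writing orthonormal bases y_1,...,y_m of V and y_{m+1},...,y_N of V⊥, B = (y_1 ⋯ y_m) B̃_V (y_1 ⋯ y_m)ᵀ + (y_{m+1} ⋯ y_N) B̃_{V⊥} (y_{m+1} ⋯ y_N)ᵀ for some m×m matrix B̃_V and (N−m)×(N−m) matrix B̃_{V⊥}. -/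
open Matrix Finset

/-- A nonnegative square matrix is irreducible if its associated directed graph
(with an edge from `i` to `j` whenever `B i j > 0`) is strongly connected. -/
def MatIrreducible {N : ℕ} (B : Matrix (Fin N) (Fin N) ℝ) : Prop :=
  ∀ i j : Fin N, Relation.ReflTransGen (fun a b => 0 < B a b) i j

open Module Submodule

/-!
Comparing the NIMFA field at `v` and at `2 v` isolates its linear part `-S v + B v`, so together
with `S V ⊆ V` the subspace `V` is invariant under `B`. As `B` is symmetric, so is `V⊥`; hence `B`
commutes with the orthogonal projection onto `V`, and in an orthonormal basis adapted to
`V ⊕ V⊥` the matrix of `B` has no entries between the two blocks.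
-/

theorem Matrix.mulVec_mem_of_nimfa_invariant {ι : Type*} [Fintype ι] {B : Matrix ι ι ℝ}
    {δ : ι → ℝ} {V : Submodule ℝ (ι → ℝ)} (hSV : ∀ v ∈ V, (fun i => δ i * v i) ∈ V)
    (hinv : ∀ v ∈ V, (fun i => -δ i * v i + (1 - v i) * ∑ j, B i j * v j) ∈ V)
    {v : ι → ℝ} (hv : v ∈ V) : B *ᵥ v ∈ V := by
  let f : (ι → ℝ) → ι → ℝ := fun v i => -δ i * v i + (1 - v i) * ∑ j, B i j * v j
  -- the quadratic part of `f` cancels in `2 f(v) - f(2v) / 2`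
  have key : B *ᵥ v = (2 : ℝ) • f v - (2⁻¹ : ℝ) • f ((2 : ℝ) • v) + fun i => δ i * v i := by
    ext i
    simp only [f, mulVec, dotProduct, Pi.add_apply, Pi.sub_apply, Pi.smul_apply, smul_eq_mul,
      mul_left_comm _ (2 : ℝ), ← Finset.mul_sum]
    ring
  rw [key]
  exact V.add_mem (V.sub_mem (V.smul_mem _ (hinv v hv)) (V.smul_mem _ (hinv _ (V.smul_mem 2 hv))))
    (hSV v hv)

theorem IsIdempotentElem.eq_mul_mul_add_one_sub_mul_mul {R : Type*} [Ring R] {p a : R}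
    (hp : IsIdempotentElem p) (hpa : Commute p a) :
    a = p * a * p + (1 - p) * a * (1 - p) := by
  simp only [mul_sub, sub_mul, mul_one, one_mul, hpa.eq, mul_assoc, hp.eq]
  abel

theorem Matrix.commute_of_isSymm_of_mulVec_mem {ι : Type*} [Fintype ι]
    {P B : Matrix ι ι ℝ} {V : Submodule ℝ (ι → ℝ)} (hP : P.IsSymm)
    (hP_mem : ∀ w, P *ᵥ w ∈ V) (hP_fix : ∀ v ∈ V, P *ᵥ v = v) (hB : B.IsSymm)
    (hBV : ∀ v ∈ V, B *ᵥ v ∈ V) : Commute P B := by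
  have hBP : P * B * P = B * P := by
    refine mulVec_injective (funext fun w => ?_)
    simp only [← mulVec_mulVec]
    exact hP_fix _ (hBV _ (hP_mem w))
  have hPB : P * B * P = P * B := by
    simpa only [transpose_mul, hP.eq, hB.eq, mul_assoc] using congrArg transpose hBP
  exact hPB.symm.trans hBP

theorem Matrix.exists_isSymm_projection {ι : Type*} [Fintype ι] [DecidableEq ι]
    (V : Submodule ℝ (ι → ℝ)) :
    ∃ P : Matrix ι ι ℝ, P.IsSymm ∧ IsIdempotentElem P ∧ (∀ w, P *ᵥ w ∈ V) ∧
      ∀ v ∈ V, P *ᵥ v = v := by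
  let W := V.comap (WithLp.linearEquiv 2 ℝ (ι → ℝ)).toLinearMap
  let P := (toEuclideanCLM (𝕜 := ℝ) (n := ι)).symm W.starProjection
  have hP : ∀ w, P *ᵥ w = (W.starProjection (WithLp.toLp 2 w)).ofLp := fun w => by
    rw [← ofLp_toEuclideanCLM, StarAlgEquiv.apply_symm_apply]
  refine ⟨P, ?_, (W.isIdempotentElem_starProjection).map _, fun w => ?_, fun v hv => ?_⟩
  · rw [IsSymm, ← conjTranspose_eq_transpose_of_trivial]
    exact ((isSelfAdjoint_starProjection W).map (toEuclideanCLM (𝕜 := ℝ) (n := ι)).symm).star_eq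
  · rw [hP]; exact W.starProjection_apply_mem _
  · rw [hP, starProjection_eq_self_iff.mpr hv]

section InnerProductSpace

variable {𝕜 E : Type*} [RCLike 𝕜] [NormedAddCommGroup E] [InnerProductSpace 𝕜 E]

theorem OrthonormalBasis.span_image_compl {ι : Type*} [Fintype ι] (b : OrthonormalBasis ι 𝕜 E)
    (s : Set ι) : span 𝕜 (b '' sᶜ) = (span 𝕜 (b '' s))ᗮ := by
  apply le_antisymm
  · rw [← isOrtho_iff_le, isOrtho_span]
    rintro _ ⟨k, hk, rfl⟩ _ ⟨l, hl, rfl⟩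
    exact b.orthonormal.2 fun hkl => hk (hkl ▸ hl)
  · intro x hx
    rw [← b.coe_toBasis, b.toBasis.mem_span_image]
    intro k hk
    by_contra hks
    apply (Finsupp.mem_support_iff.mp hk)
    rw [OrthonormalBasis.coe_toBasis_repr_apply, b.repr_apply_apply]
    exact inner_right_of_mem_orthogonal (subset_span (Set.mem_image_of_mem b (not_not.mp hks))) hx

theorem OrthonormalBasis.exists_span_image_fin_lt_eq [FiniteDimensional 𝕜 E] {n m : ℕ}
    (hn : finrank 𝕜 E = n) (K : Submodule 𝕜 E) (hK : finrank 𝕜 K = m) :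
    ∃ b : OrthonormalBasis (Fin n) 𝕜 E, span 𝕜 (b '' {k | (k : ℕ) < m}) = K := by
  have hmn : m ≤ n := hK ▸ hn ▸ K.finrank_le
  let bK := (stdOrthonormalBasis 𝕜 K).reindex (finCongr hK)
  let v : Fin n → E := Function.extend (Fin.castLE hmn) (fun i => (bK i : E)) 0
  have hv : ∀ i, v (Fin.castLE hmn i) = bK i :=
    (Fin.castLE_injective hmn).extend_apply _ _
  have hon : Orthonormal 𝕜 ((Set.range (Fin.castLE hmn)).domRestrict v) := by
    have : (Set.range (Fin.castLE hmn)).domRestrict v =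
        (K.subtypeₗᵢ ∘ bK) ∘ (Equiv.ofInjective _ (Fin.castLE_injective hmn)).symm := by
      ext ⟨_, i, rfl⟩
      simpa using hv i
    rw [this]
    exact (bK.orthonormal.comp_linearIsometry _).comp _ (Equiv.injective _)
  obtain ⟨b, hb⟩ := hon.exists_orthonormalBasis_extension_of_card_eq (by simp [hn])
  have hbK : b ∘ Fin.castLE hmn = K.subtype ∘ bK :=
    funext fun i => (hb _ ⟨i, rfl⟩).trans (hv i)
  refine ⟨b, ?_⟩
  rw [← Fin.range_castLE hmn, ← Set.range_comp, hbK, Set.range_comp, span_image,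
    ← bK.coe_toBasis, bK.toBasis.span_eq, map_subtype_top]

end InnerProductSpace

theorem Matrix.exists_orthonormal_span_image_fin_lt_eq {N m : ℕ} (V : Submodule ℝ (Fin N → ℝ))
    (hV : finrank ℝ V = m) :
    ∃ y : Fin N → Fin N → ℝ, (∀ k l, y k ⬝ᵥ y l = if k = l then 1 else 0) ∧
      V = span ℝ (y '' {k | (k : ℕ) < m}) ∧
      ∀ w, w ∈ span ℝ (y '' {k | m ≤ (k : ℕ)}) ↔ ∀ v ∈ V, w ⬝ᵥ v = 0 := by
  let e := WithLp.linearEquiv 2 ℝ (Fin N → ℝ)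
  have hW : finrank ℝ (V.comap e.toLinearMap) = m := by
    rw [comap_equiv_eq_map_symm, LinearEquiv.finrank_map_eq, hV]
  have hinner : ∀ x x' : EuclideanSpace ℝ (Fin N), inner ℝ x x' = e x ⬝ᵥ e x' := fun x x' => by
    rw [EuclideanSpace.inner_eq_star_dotProduct, star_trivial, dotProduct_comm]; rfl
  obtain ⟨b, hb⟩ := OrthonormalBasis.exists_span_image_fin_lt_eq finrank_euclideanSpace_fin _ hW
  have hspan : ∀ s, span ℝ ((e ∘ b) '' s) = (span ℝ (b '' s)).map e.toLinearMap := fun s => by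
    rw [Set.image_comp, ← span_image]; rfl
  refine ⟨e ∘ b, fun k l => ?_, ?_, fun w => ?_⟩
  · rw [Function.comp_apply, Function.comp_apply, ← hinner, orthonormal_iff_ite.mp b.orthonormal]
  · rw [hspan, hb, map_comap_eq_of_surjective e.surjective]
  · rw [show {k : Fin N | m ≤ (k : ℕ)} = {k : Fin N | (k : ℕ) < m}ᶜ by ext; simp, hspan,
      b.span_image_compl, hb, Submodule.mem_map_equiv, mem_orthogonal]
    constructor
    · intro h v hv
      simpa [hinner, dotProduct_comm] using h (e.symm v) (by simpa using hv)
    · intro h x hx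
      simpa [hinner, dotProduct_comm] using h (e x) hx

theorem Matrix.dotProduct_mulVec_eq_zero_of_mem_of_orthogonal {ι : Type*} [Fintype ι]
    {B : Matrix ι ι ℝ} {V : Submodule ℝ (ι → ℝ)} (hB : B.IsSymm) (hBV : ∀ v ∈ V, B *ᵥ v ∈ V)
    {v w : ι → ℝ} (hv : v ∈ V) (hw : ∀ u ∈ V, w ⬝ᵥ u = 0) :
    v ⬝ᵥ B *ᵥ w = 0 ∧ w ⬝ᵥ B *ᵥ v = 0 := by
  refine ⟨?_, hw _ (hBV v hv)⟩
  rw [dotProduct_mulVec, ← mulVec_transpose, hB.eq, dotProduct_comm]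
  exact hw _ (hBV v hv)

theorem Matrix.eq_sum_sum_of_orthonormal {ι : Type*} [Fintype ι] [DecidableEq ι]
    {y : ι → ι → ℝ} (hy : ∀ k l, y k ⬝ᵥ y l = if k = l then 1 else 0) (M : Matrix ι ι ℝ)
    (i j : ι) : M i j = ∑ k, ∑ l, y k i * (y k ⬝ᵥ M *ᵥ y l) * y l j := by
  let Y : Matrix ι ι ℝ := Matrix.of y
  have hYYt : Y * Yᵀ = 1 := by
    ext k l
    simpa [Y, mul_apply, dotProduct, one_apply] using hy k l
  have hM : M = Yᵀ * (Y * M * Yᵀ) * Y := by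
    rw [← mul_assoc, ← mul_assoc, mul_eq_one_comm.mp hYYt, one_mul, mul_assoc,
      mul_eq_one_comm.mp hYYt, mul_one]
  conv_lhs => rw [hM, mul_mul_apply]; simp only [dotProduct, mulVec, Finset.mul_sum]
  refine sum_congr rfl fun k _ => sum_congr rfl fun l _ => ?_
  rw [mul_mul_apply, transpose_transpose]
  exact (mul_assoc _ _ _).symm

theorem Finset.sum_sum_eq_add_of_eq_zero {ι M : Type*} [Fintype ι] [AddCommMonoid M]
    (p : ι → Prop) [DecidablePred p] {f : ι → ι → M} (hf : ∀ k l, ¬(p k ↔ p l) → f k l = 0) :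
    ∑ k, ∑ l, f k l = ∑ k ∈ univ.filter p, ∑ l ∈ univ.filter p, f k l +
      ∑ k ∈ univ.filter (¬p ·), ∑ l ∈ univ.filter (¬p ·), f k l := by
  have hsplit : ∀ k, ∑ l, f k l =
      ∑ l ∈ univ.filter p, f k l + ∑ l ∈ univ.filter (¬p ·), f k l := fun k =>
    (sum_filter_add_sum_filter_not univ p _).symm
  rw [← sum_filter_add_sum_filter_not univ p]
  congr 1 <;> refine sum_congr rfl fun k hk => ?_
  · rw [hsplit k, sum_eq_zero (s := univ.filter (¬p ·)) fun l hl => hf k l (by simp_all),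
      add_zero]
  · rw [hsplit k, sum_eq_zero (s := univ.filter p) fun l hl => hf k l (by simp_all), zero_add]

theorem nimfa_infection_matrix_decomposition_general
    {N m : ℕ} (B : Matrix (Fin N) (Fin N) ℝ) (δ : Fin N → ℝ)
    (hB_symm : B.IsSymm)
    (V : Submodule ℝ (Fin N → ℝ))
    (hdim : Module.finrank ℝ V = m)
    (hSV : ∀ v ∈ V, (fun i => δ i * v i) ∈ V)
    (hinv : ∀ v ∈ V, (fun i => -δ i * v i + (1 - v i) * ∑ j, B i j * v j) ∈ V) :
    (∃ P : Matrix (Fin N) (Fin N) ℝ,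
      P.IsSymm ∧ P * P = P ∧
      (∀ w : Fin N → ℝ, P.mulVec w ∈ V) ∧
      (∀ v ∈ V, P.mulVec v = v) ∧
      B = P * B * P + (1 - P) * B * (1 - P)) ∧
    (∃ (y : Fin N → (Fin N → ℝ)) (BtV BtVperp : Matrix (Fin N) (Fin N) ℝ),
      (∀ k l : Fin N, y k ⬝ᵥ y l = if k = l then 1 else 0) ∧
      V = Submodule.span ℝ (y '' {k : Fin N | (k : ℕ) < m}) ∧
      (∀ w : Fin N → ℝ,
        w ∈ Submodule.span ℝ (y '' {k : Fin N | m ≤ (k : ℕ)}) ↔ ∀ v ∈ V, w ⬝ᵥ v = 0) ∧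
      (∀ i j : Fin N, B i j =
        (∑ k ∈ univ.filter (fun k : Fin N => (k : ℕ) < m),
          ∑ l ∈ univ.filter (fun l : Fin N => (l : ℕ) < m), y k i * BtV k l * y l j) +
        (∑ k ∈ univ.filter (fun k : Fin N => m ≤ (k : ℕ)),
          ∑ l ∈ univ.filter (fun l : Fin N => m ≤ (l : ℕ)), y k i * BtVperp k l * y l j))) := by
  have hBV : ∀ v ∈ V, B *ᵥ v ∈ V := fun v hv => mulVec_mem_of_nimfa_invariant hSV hinv hv
  obtain ⟨P, hP_symm, hP_idem, hP_mem, hP_fix⟩ := exists_isSymm_projection V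
  have hPB : Commute P B := commute_of_isSymm_of_mulVec_mem hP_symm hP_mem hP_fix hB_symm hBV
  refine ⟨⟨P, hP_symm, hP_idem, hP_mem, hP_fix, hP_idem.eq_mul_mul_add_one_sub_mul_mul hPB⟩, ?_⟩
  obtain ⟨y, hy, hV, hVperp⟩ := exists_orthonormal_span_image_fin_lt_eq V hdim
  have hcross : ∀ k l : Fin N, ¬((k : ℕ) < m ↔ (l : ℕ) < m) → y k ⬝ᵥ B *ᵥ y l = 0 := by
    have hmem : ∀ k : Fin N, (k : ℕ) < m → y k ∈ V := fun k hk => hV ▸ subset_span ⟨k, hk, rfl⟩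
    have hperp : ∀ k : Fin N, ¬(k : ℕ) < m → ∀ v ∈ V, y k ⬝ᵥ v = 0 := fun k hk =>
      (hVperp _).mp (subset_span ⟨k, not_lt.mp hk, rfl⟩)
    intro k l hkl
    by_cases hk : (k : ℕ) < m
    · exact (dotProduct_mulVec_eq_zero_of_mem_of_orthogonal hB_symm hBV (hmem k hk)
        (hperp l (by tauto))).1
    · exact (dotProduct_mulVec_eq_zero_of_mem_of_orthogonal hB_symm hBV (hmem l (by tauto))
        (hperp k hk)).2
  let C : Matrix (Fin N) (Fin N) ℝ := of fun k l => y k ⬝ᵥ B *ᵥ y l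
  refine ⟨y, C, C, hy, hV, hVperp, fun i j => ?_⟩
  rw [eq_sum_sum_of_orthonormal hy B i j,
    sum_sum_eq_add_of_eq_zero (fun k : Fin N => (k : ℕ) < m) fun k l hkl => by
      rw [hcross k l hkl, mul_zero, zero_mul]]
  simp only [not_lt, C, of_apply]

/-- **Lemma 2, decomposition of the infection rate matrix.** If `B` is symmetric,
irreducible and nonnegative, `S = diag(δ)` has positive diagonal, and `V` is an `m`-dimensional
invariant set of NIMFA with `S V ⊆ V`, then, with `P` the orthogonal projection matrix onto `V`
(symmetric, idempotent, range `V`, fixing `V`), `B = P B P + (1 - P) B (1 - P)`; equivalently,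
there are orthonormal bases `y_1,...,y_m` of `V` and `y_{m+1},...,y_N` of `V⊥` and matrices
`B̃_V`, `B̃_{V⊥}` such that
`B = (y_1 ⋯ y_m) B̃_V (y_1 ⋯ y_m)ᵀ + (y_{m+1} ⋯ y_N) B̃_{V⊥} (y_{m+1} ⋯ y_N)ᵀ`. -/
theorem nimfa_infection_matrix_decomposition
    {N m : ℕ} (B : Matrix (Fin N) (Fin N) ℝ) (δ : Fin N → ℝ)
    (hB_symm : B.IsSymm)
    (hB_irr : MatIrreducible B)
    (hB_nonneg : ∀ i j, 0 ≤ B i j)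
    (hδ_pos : ∀ i, 0 < δ i)
    (V : Submodule ℝ (Fin N → ℝ))
    (hdim : Module.finrank ℝ V = m)
    (hSV : ∀ v ∈ V, (fun i => δ i * v i) ∈ V)
    (hinv : ∀ v ∈ V, (fun i => -δ i * v i + (1 - v i) * ∑ j, B i j * v j) ∈ V) :
    (∃ P : Matrix (Fin N) (Fin N) ℝ,
      P.IsSymm ∧ P * P = P ∧
      (∀ w : Fin N → ℝ, P.mulVec w ∈ V) ∧
      (∀ v ∈ V, P.mulVec v = v) ∧
      B = P * B * P + (1 - P) * B * (1 - P)) ∧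
    (∃ (y : Fin N → (Fin N → ℝ)) (BtV BtVperp : Matrix (Fin N) (Fin N) ℝ),
      (∀ k l : Fin N, y k ⬝ᵥ y l = if k = l then 1 else 0) ∧
      V = Submodule.span ℝ (y '' {k : Fin N | (k : ℕ) < m}) ∧
      (∀ w : Fin N → ℝ,
        w ∈ Submodule.span ℝ (y '' {k : Fin N | m ≤ (k : ℕ)}) ↔ ∀ v ∈ V, w ⬝ᵥ v = 0) ∧
      (∀ i j : Fin N, B i j =
        (∑ k ∈ univ.filter (fun k : Fin N => (k : ℕ) < m),
          ∑ l ∈ univ.filter (fun l : Fin N => (l : ℕ) < m), y k i * BtV k l * y l j) +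
        (∑ k ∈ univ.filter (fun k : Fin N => m ≤ (k : ℕ)),
          ∑ l ∈ univ.filter (fun l : Fin N => m ≤ (l : ℕ)), y k i * BtVperp k l * y l j))) :=
  nimfa_infection_matrix_decomposition_general B δ hB_symm V hdim hSV hinv
end

section
/- Let B be a symmetric N×N infection rate matrix with a partition π = {N_1,...,N_r} such that β_ij = b_{pl} whenever i ∈ N_p and j ∈ N_l (block-constant infection rates, so π is equitable), suppose δ_i = δ_j whenever i,j lie in the same cell, and assume ker(B) equals the orthogonal complement of V_{≠0} := span{y_1,...,y_r}, where y_l are the normalized indicator vectors of π. Let v : [0,∞) → ℝ^N be any solution of NIMFA and let ṽ(t) = Σ_{l=1}^r (y_lᵀ v(t)) y_l be the orthogonal projection of v(t) onto V_{≠0}. Then the r×1 reduced-size projection ṽ^π(t), defined by ṽ^π_l(t) = y_lᵀ v(t)/√|N_l|, evolves autonomously (independently of the projection of v(t) onto ker(B)) according to dṽ^π(t)/dt = -S^π ṽ^π(t) + diag(u_r - ṽ^π(t)) B^π ṽ^π(t), where B^π is the quotient matrix, S^π = diag(δ_{i_1},...,δ_{i_r}) for representatives i_l ∈ N_l, and u_r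 is the r×1 all-one vector. -/
/-!
With block-constant rates `β_ij = b_{c(i) c(j)}`, the infection pressure `∑_j β_ij v_j` on a
node of cell `p` equals `∑_l (B^π)_{pl} m_l`, where `m_l` is the mean of `v` over cell `l`,
and the curing rate is `δ_{i_p}`: both are the same for all nodes of the cell. Averaging the
NIMFA equations over cell `p` is linear in `v_i`, so it gives the NIMFA equation for `m_p`
with `S^π` and `B^π`; and `y_pᵀ v / √|N_p|` is exactly `m_p`.
-/

open Matrix Finset

noncomputable def indVec {N r : ℕ} (c : Fin N → Fin r) (l : Fin r) : Fin N → ℝ :=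
  fun i => if c i = l then
    1 / Real.sqrt ((Finset.univ.filter (fun k => c k = l)).card) else 0

section CellMean

variable {ι κ : Type*} [Fintype ι] [DecidableEq κ]

noncomputable def cellMean (c : ι → κ) (l : κ) (w : ι → ℝ) : ℝ :=
  (∑ i with c i = l, w i) / #{i | c i = l}

variable {c : ι → κ}

theorem cellMean_congr {l : κ} {w w' : ι → ℝ} (h : ∀ i, c i = l → w i = w' i) :
    cellMean c l w = cellMean c l w' := by
  unfold cellMean
  congr 1
  exact sum_congr rfl fun i hi => h i (mem_filter.mp hi).2

theorem hasDerivAt_cellMean {x : ℝ → ι → ℝ} {x' : ι → ℝ} {t : ℝ} (l : κ)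
    (hx : ∀ i, HasDerivAt (fun s => x s i) (x' i) t) :
    HasDerivAt (fun s => cellMean c l (x s)) (cellMean c l x') t :=
  (HasDerivAt.fun_sum fun i _ => hx i).div_const _

theorem cellMean_neg_mul_add_one_sub_mul {l : κ} (hl : ({i | c i = l} : Finset ι).Nonempty)
    (d R : ℝ) (w : ι → ℝ) :
    cellMean c l (fun i => -d * w i + (1 - w i) * R)
      = -d * cellMean c l w + (1 - cellMean c l w) * R := by
  have hcard : (#{i | c i = l} : ℝ) ≠ 0 := by exact_mod_cast hl.card_pos.ne'
  simp only [cellMean, sum_add_distrib, ← mul_sum, ← sum_mul, sum_sub_distrib, sum_const,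
    nsmul_eq_mul, mul_one]
  field_simp

variable {B : Matrix ι ι ℝ} {b : κ → κ → ℝ}

theorem sum_cell_mul_cellMean (hblock : ∀ i j, B i j = b (c i) (c j)) {l : κ}
    (hl : ({i | c i = l} : Finset ι).Nonempty) (i : ι) (w : ι → ℝ) :
    (∑ k with c k = l, B i k) * cellMean c l w = b (c i) l * ∑ j with c j = l, w j := by
  have hcard : (#{i | c i = l} : ℝ) ≠ 0 := by exact_mod_cast hl.card_pos.ne'
  have hrow : ∑ k with c k = l, B i k = b (c i) l * #{i | c i = l} := by
    rw [sum_congr rfl fun k hk => by rw [hblock, (mem_filter.mp hk).2], sum_const,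
      nsmul_eq_mul, mul_comm]
  rw [hrow, cellMean]
  field_simp

variable [Fintype κ]

theorem sum_mul_eq_sum_block_mul_sum_cell (hblock : ∀ i j, B i j = b (c i) (c j))
    (i : ι) (w : ι → ℝ) :
    ∑ j, B i j * w j = ∑ l, b (c i) l * ∑ j with c j = l, w j := by
  rw [← sum_fiberwise univ c]
  refine sum_congr rfl fun l _ => ?_
  rw [mul_sum]
  exact sum_congr rfl fun j hj => by rw [hblock, (mem_filter.mp hj).2]

theorem sum_mul_eq_sum_quotient_mul_cellMean (hblock : ∀ i j, B i j = b (c i) (c j))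
    (hne : ∀ l, ({i | c i = l} : Finset ι).Nonempty) {i i₀ : ι} (hi : c i = c i₀)
    (w : ι → ℝ) :
    ∑ j, B i j * w j = ∑ l, (∑ k with c k = l, B i₀ k) * cellMean c l w := by
  rw [sum_mul_eq_sum_block_mul_sum_cell hblock, hi]
  exact sum_congr rfl fun l _ => (sum_cell_mul_cellMean hblock (hne l) i₀ w).symm

end CellMean

theorem indVec_dotProduct_div_sqrt {N r : ℕ} (c : Fin N → Fin r) (l : Fin r)
    (w : Fin N → ℝ) :
    (indVec c l ⬝ᵥ w) / Real.sqrt #{k | c k = l} = cellMean c l w := by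
  have hdot : indVec c l ⬝ᵥ w = (∑ i with c i = l, w i) / Real.sqrt #{i | c i = l} := by
    simp only [indVec, dotProduct, ite_mul, zero_mul, sum_div, ← sum_filter]
    exact sum_congr rfl fun i _ => by ring
  rw [hdot, div_div, Real.mul_self_sqrt (Nat.cast_nonneg _), cellMean]

theorem nimfa_projection_reduced_dynamics_general
    {N r : ℕ} (B : Matrix (Fin N) (Fin N) ℝ) (δ : Fin N → ℝ)
    (c : Fin N → Fin r) (rep : Fin r → Fin N)
    (hrep : ∀ l, c (rep l) = l)
    (b : Fin r → Fin r → ℝ)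
    (hblock : ∀ i j, B i j = b (c i) (c j))
    (hδ_cell : ∀ i j, c i = c j → δ i = δ j)
    (v : ℝ → Fin N → ℝ)
    (hsol : ∀ t : ℝ, 0 ≤ t → ∀ i, HasDerivAt (fun s => v s i)
      (-δ i * v t i + (1 - v t i) * ∑ j, B i j * v t j) t) :
    ∀ t : ℝ, 0 ≤ t → ∀ p : Fin r,
      HasDerivAt
        (fun s => (indVec c p ⬝ᵥ v s) /
          Real.sqrt ((Finset.univ.filter (fun k => c k = p)).card))
        (-δ (rep p) * ((indVec c p ⬝ᵥ v t) /
            Real.sqrt ((Finset.univ.filter (fun k => c k = p)).card))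
          + (1 - (indVec c p ⬝ᵥ v t) /
            Real.sqrt ((Finset.univ.filter (fun k => c k = p)).card)) *
          ∑ l : Fin r,
            (∑ k ∈ univ.filter (fun k => c k = l), B (rep p) k) *
              ((indVec c l ⬝ᵥ v t) /
                Real.sqrt ((Finset.univ.filter (fun k => c k = l)).card))) t := by
  intro t ht p
  have hne : ∀ l, ({i | c i = l} : Finset (Fin N)).Nonempty :=
    fun l => ⟨rep l, by simp [hrep]⟩
  simp only [indVec_dotProduct_div_sqrt]
  rw [← cellMean_neg_mul_add_one_sub_mul (hne p)]
  refine (hasDerivAt_cellMean p (hsol t ht)).congr_deriv (cellMean_congr fun i hi => ?_)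
  have hi' : c i = c (rep p) := by rw [hi, hrep]
  rw [hδ_cell i (rep p) hi', sum_mul_eq_sum_quotient_mul_cellMean hblock hne hi']

/-- **Theorem 3, first part: autonomous evolution of the cell averages.**
For block-constant infection rates `β_ij = b_{c(i) c(j)}` (so the partition is equitable),
curing rates constant on cells, and `ker(B)` equal to the orthogonal complement of
`V_{≠0} = span{y_1,...,y_r}`, the reduced-size projection `ṽ^π_l(t) = y_lᵀ v(t)/√|N_l|`
of any NIMFA solution evolves autonomously according to the reduced NIMFA system with
the quotient matrix `B^π`. -/
theorem nimfa_projection_reduced_dynamics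
    {N r : ℕ} (B : Matrix (Fin N) (Fin N) ℝ) (δ : Fin N → ℝ)
    (c : Fin N → Fin r) (rep : Fin r → Fin N)
    (hrep : ∀ l, c (rep l) = l)
    (hB_symm : B.IsSymm)
    (hB_nonneg : ∀ i j, 0 ≤ B i j)
    (hδ_pos : ∀ i, 0 < δ i)
    (b : Fin r → Fin r → ℝ)
    (hblock : ∀ i j, B i j = b (c i) (c j))
    (hδ_cell : ∀ i j, c i = c j → δ i = δ j)
    (hker : ∀ w : Fin N → ℝ, B.mulVec w = 0 ↔ ∀ l : Fin r, indVec c l ⬝ᵥ w = 0)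
    (v : ℝ → Fin N → ℝ)
    (hsol : ∀ t : ℝ, 0 ≤ t → ∀ i, HasDerivAt (fun s => v s i)
      (-δ i * v t i + (1 - v t i) * ∑ j, B i j * v t j) t) :
    ∀ t : ℝ, 0 ≤ t → ∀ p : Fin r,
      HasDerivAt
        (fun s => (indVec c p ⬝ᵥ v s) /
          Real.sqrt ((Finset.univ.filter (fun k => c k = p)).card))
        (-δ (rep p) * ((indVec c p ⬝ᵥ v t) /
            Real.sqrt ((Finset.univ.filter (fun k => c k = p)).card))
          + (1 - (indVec c p ⬝ᵥ v t) /
            Real.sqrt ((Finset.univ.filter (fun k => c k = p)).card)) *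
          ∑ l : Fin r,
            (∑ k ∈ univ.filter (fun k => c k = l), B (rep p) k) *
              ((indVec c l ⬝ᵥ v t) /
                Real.sqrt ((Finset.univ.filter (fun k => c k = l)).card))) t :=
  nimfa_projection_reduced_dynamics_general B δ c rep hrep b hblock hδ_cell v hsol
end

section
/- Consider NIMFA on the complete graph: β_ij = β > 0 for all i,j = 1,...,N and δ_i = δ > 0 for all i, with βN > δ. Let v∞ = (1 - δ/(βN)) u, and let v(0) ∈ [0,1]^N satisfy 0 < v∞ᵀ v(0) < ‖v∞‖₂² and v_ker(0) := (I - (1/N) u uᵀ) v(0) ≠ 0. Then the solution of NIMFA with initial state v(0) is, for all t ≥ 0, v(t) = c₁(t) v∞ + c₂(t) v_ker(0), where, with the viral slope w = βN - δ, Φ = βN(1 - δ/(βN))/2 + δ, Υ₁(0) = arctanh(2 v∞ᵀ v(0)/‖v∞‖₂² - 1), and Υ₂(0) = (v_ker(0)ᵀ v(0)/‖v_ker(0)‖₂²) · cosh(Υ₁(0)): c₁(t) = (1/2)(1 + tanh((w/2) t + Υ₁(0))) and c₂(t) = Υ₂(0) e^{-Φ t} sech((w/2) t + Υ₁(0)).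 -/
/-!
On the complete graph the NIMFA flow respects the splitting `ℝᴺ = ℝ u ⊕ u⊥`: if `∑ zᵢ = 0`, every
node feels the same infection pressure `β (uᵀ v) = w c₁`, so `c₁ v∞ + c₂ z` is a solution as soon
as `c₁` solves the logistic equation `c₁' = w c₁ (1 - c₁)` and `c₂' = -(δ + w c₁) c₂`; the
`tanh`/`sech` formulas do. Their values at `t = 0` are the coordinates of `v(0)` in the orthogonal
decomposition along `v∞` and `v_ker(0)`. The NIMFA vector field is polynomial, hence locally
Lipschitz, so by Grönwall's inequality it has only one solution with a given initial value.
-/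

open Matrix Finset

/-- The inverse hyperbolic tangent, `arctanh x = (1/2) log((1+x)/(1-x))`. -/
noncomputable def arctanh (x : ℝ) : ℝ := (1 / 2) * Real.log ((1 + x) / (1 - x))

open Real Set

theorem tanh_arctanh {x : ℝ} (hx : x ∈ Set.Ioo (-1) 1) : tanh (arctanh x) = x := by
  rw [arctanh, ← artanh_eq_half_log (Ioo_subset_Icc_self hx), Real.tanh_artanh hx]

theorem Real.hasDerivAt_tanh (x : ℝ) : HasDerivAt tanh (1 - tanh x ^ 2) x := by
  rw [show tanh = sinh / cosh from funext tanh_eq_sinh_div_cosh]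
  refine ((hasDerivAt_sinh x).div (hasDerivAt_cosh x) (cosh_pos x).ne').congr_deriv ?_
  rw [Pi.div_apply]
  field_simp

theorem ODE_solution_unique_of_locallyLipschitz {E : Type*} [NormedAddCommGroup E]
    [NormedSpace ℝ E] {F : E → E} (hF : LocallyLipschitz F) {f g : ℝ → E} {a b : ℝ}
    (hf : ∀ t ∈ Icc a b, HasDerivAt f (F (f t)) t)
    (hg : ∀ t ∈ Icc a b, HasDerivAt g (F (g t)) t) (ha : f a = g a) :
    EqOn f g (Icc a b) := by
  have hfc : ContinuousOn f (Icc a b) := fun t ht => (hf t ht).continuousAt.continuousWithinAt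
  have hgc : ContinuousOn g (Icc a b) := fun t ht => (hg t ht).continuousAt.continuousWithinAt
  obtain ⟨K, hK⟩ := hF.locallyLipschitzOn.exists_lipschitzOnWith_of_compact
    ((isCompact_Icc.image_of_continuousOn hfc).union (isCompact_Icc.image_of_continuousOn hgc))
  exact ODE_solution_unique_of_mem_Icc_right (v := fun _ => F) (fun _ _ => hK)
    hfc (fun t ht => (hf t (Ico_subset_Icc_self ht)).hasDerivWithinAt)
    (fun t ht => .inl (mem_image_of_mem f (Ico_subset_Icc_self ht)))
    hgc (fun t ht => (hg t (Ico_subset_Icc_self ht)).hasDerivWithinAt)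
    (fun t ht => .inr (mem_image_of_mem g (Ico_subset_Icc_self ht))) ha

theorem dotProduct_smul_add_div_self {ι : Type*} [Fintype ι] {a z : ι → ℝ} (c : ℝ)
    (ha : a ≠ 0) (haz : a ⬝ᵥ z = 0) : a ⬝ᵥ (c • a + z) / (a ⬝ᵥ a) = c := by
  rw [dotProduct_add, dotProduct_smul, haz, add_zero, smul_eq_mul, mul_div_assoc,
    div_self (dotProduct_self_eq_zero.not.mpr ha), mul_one]

noncomputable section

namespace NIMFA

/-- The NIMFA vector field `-S x + diag(u - x) B x`, with `S = diag δ`. -/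
def field {ι : Type*} [Fintype ι] (δ : ι → ℝ) (B : Matrix ι ι ℝ) (x : ι → ℝ) : ι → ℝ :=
  fun i => -δ i * x i + (1 - x i) * (B *ᵥ x) i

theorem contDiff_field {ι : Type*} [Fintype ι] (δ : ι → ℝ) (B : Matrix ι ι ℝ) :
    ContDiff ℝ 1 (field δ B) := by
  refine contDiff_pi.2 fun i => ?_
  simp only [field, mulVec, dotProduct]
  fun_prop

def c₁ (w Υ₁ t : ℝ) : ℝ := 1 / 2 * (1 + tanh (w / 2 * t + Υ₁))

def c₂ (w Φ Υ₁ Υ₂ t : ℝ) : ℝ := Υ₂ * exp (-Φ * t) * (1 / cosh (w / 2 * t + Υ₁))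

def closedForm {ι : Type*} (w Φ Υ₁ Υ₂ : ℝ) (a z : ι → ℝ) (t : ℝ) : ι → ℝ :=
  fun i => c₁ w Υ₁ t * a i + c₂ w Φ Υ₁ Υ₂ t * z i

variable {w Φ Υ₁ Υ₂ : ℝ}

theorem hasDerivAt_c₁ (t : ℝ) :
    HasDerivAt (c₁ w Υ₁) (w * c₁ w Υ₁ t * (1 - c₁ w Υ₁ t)) t := by
  have hq : HasDerivAt (fun s => w / 2 * s + Υ₁) (w / 2) t := by
    simpa using ((hasDerivAt_id t).const_mul (w / 2)).add_const Υ₁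
  unfold c₁
  refine ((((hasDerivAt_tanh _).comp t hq).const_add 1).const_mul (1 / 2)).congr_deriv ?_
  ring

theorem hasDerivAt_c₂ (t : ℝ) :
    HasDerivAt (c₂ w Φ Υ₁ Υ₂) ((w / 2 - Φ - w * c₁ w Υ₁ t) * c₂ w Φ Υ₁ Υ₂ t) t := by
  have hq : HasDerivAt (fun s => w / 2 * s + Υ₁) (w / 2) t := by
    simpa using ((hasDerivAt_id t).const_mul (w / 2)).add_const Υ₁
  have hexp : HasDerivAt (fun s => exp (-Φ * s)) (exp (-Φ * t) * -Φ) t := by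
    simpa using ((hasDerivAt_id t).const_mul (-Φ)).exp
  have hcosh := (cosh_pos (w / 2 * t + Υ₁)).ne'
  have hsech : HasDerivAt (fun s => (cosh (w / 2 * s + Υ₁))⁻¹)
      (-(sinh (w / 2 * t + Υ₁) * (w / 2)) / cosh (w / 2 * t + Υ₁) ^ 2) t :=
    ((hasDerivAt_cosh _).comp t hq).inv hcosh
  unfold c₂
  simp only [one_div]
  refine ((hexp.const_mul Υ₂).mul hsech).congr_deriv ?_
  simp only [c₁, tanh_eq_sinh_div_cosh]
  field_simp
  ring

theorem hasDerivAt_closedForm {N : ℕ} {β δ p : ℝ} (hw : w = β * N - δ) (hp : β * N * p = w)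
    (hΦ : Φ = w / 2 + δ) {z : Fin N → ℝ} (hz : ∑ i, z i = 0) (t : ℝ) :
    HasDerivAt (closedForm w Φ Υ₁ Υ₂ (fun _ => p) z)
      (field (fun _ => δ) (of fun _ _ => β) (closedForm w Φ Υ₁ Υ₂ (fun _ => p) z t)) t := by
  refine hasDerivAt_pi.2 fun i => (((hasDerivAt_c₁ t).mul_const p).add
    ((hasDerivAt_c₂ t).mul_const (z i))).congr_deriv ?_
  have hpressure : (of fun _ _ => β : Matrix (Fin N) (Fin N) ℝ) *ᵥ
      closedForm w Φ Υ₁ Υ₂ (fun _ => p) z t = fun _ => w * c₁ w Υ₁ t := by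
    ext j
    simp only [mulVec, dotProduct, of_apply, closedForm, ← Finset.mul_sum,
      Finset.sum_add_distrib, Finset.sum_const, Finset.card_univ, Fintype.card_fin,
      nsmul_eq_mul, hz]
    linear_combination c₁ w Υ₁ t * hp
  simp only [field, hpressure, closedForm]
  linear_combination c₁ w Υ₁ t * p * hw + c₁ w Υ₁ t * hp - c₂ w Φ Υ₁ Υ₂ t * z i * hΦ

theorem closedForm_zero {ι : Type*} [Fintype ι] {a z x : ι → ℝ} (ha : a ≠ 0) (hz : z ≠ 0)
    (haz : a ⬝ᵥ z = 0) (hx : ∃ c : ℝ, x = c • a + z) (hxa : 0 < a ⬝ᵥ x)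
    (hxa' : a ⬝ᵥ x < a ⬝ᵥ a) (hΥ₁ : Υ₁ = arctanh (2 * (a ⬝ᵥ x) / (a ⬝ᵥ a) - 1))
    (hΥ₂ : Υ₂ = z ⬝ᵥ x / (z ⬝ᵥ z) * cosh Υ₁) :
    closedForm w Φ Υ₁ Υ₂ a z 0 = x := by
  have hr : 2 * (a ⬝ᵥ x) / (a ⬝ᵥ a) < 2 := by
    rw [div_lt_iff₀ (hxa.trans hxa')]; linarith
  have htanh : tanh Υ₁ = 2 * (a ⬝ᵥ x) / (a ⬝ᵥ a) - 1 := by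
    rw [hΥ₁]
    exact tanh_arctanh ⟨by linarith [div_pos (mul_pos two_pos hxa) (hxa.trans hxa')], by linarith⟩
  obtain ⟨c, rfl⟩ := hx
  have hza : z ⬝ᵥ (c • a) = 0 := by rw [dotProduct_smul, dotProduct_comm, haz, smul_zero]
  have hcz := dotProduct_smul_add_div_self 1 hz hza
  rw [one_smul, add_comm] at hcz
  have hca := dotProduct_smul_add_div_self c ha haz
  have hcosh := (cosh_pos Υ₁).ne'
  ext i
  simp only [closedForm, c₁, c₂, mul_zero, zero_add, exp_zero, htanh, hΥ₂, hcz, mul_div_assoc,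
    hca, Pi.add_apply, Pi.smul_apply, smul_eq_mul]
  field_simp
  ring

end NIMFA

end

theorem nimfa_complete_graph_solution_general
    {N : ℕ} (β δ : ℝ)
    (hδ : 0 < δ) (hslope : δ < β * N)
    (vinf : Fin N → ℝ) (hvinf : vinf = fun _ => 1 - δ / (β * N))
    (v0 : Fin N → ℝ)
    (hdot_pos : 0 < vinf ⬝ᵥ v0) (hdot_lt : vinf ⬝ᵥ v0 < vinf ⬝ᵥ vinf)
    (vker0 : Fin N → ℝ) (hvker0 : vker0 = fun i => v0 i - (∑ j, v0 j) / N)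
    (hvker0_ne : vker0 ≠ 0)
    (w Φ Υ₁ Υ₂ : ℝ)
    (hw : w = β * N - δ)
    (hΦ : Φ = β * N * (1 - δ / (β * N)) / 2 + δ)
    (hΥ₁ : Υ₁ = arctanh (2 * (vinf ⬝ᵥ v0) / (vinf ⬝ᵥ vinf) - 1))
    (hΥ₂ : Υ₂ = (vker0 ⬝ᵥ v0 / (vker0 ⬝ᵥ vker0)) * Real.cosh Υ₁)
    (v : ℝ → Fin N → ℝ)
    (hsol : ∀ t : ℝ, 0 ≤ t → ∀ i, HasDerivAt (fun s => v s i)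
      (-δ * v t i + (1 - v t i) * ∑ j, β * v t j) t)
    (hinit : v 0 = v0) :
    ∀ t : ℝ, 0 ≤ t → ∀ i,
      v t i = (1 / 2) * (1 + Real.tanh (w / 2 * t + Υ₁)) * vinf i
        + (Υ₂ * Real.exp (-Φ * t) * (1 / Real.cosh (w / 2 * t + Υ₁))) * vker0 i := by
  have hβN : β * N ≠ 0 := (hδ.trans hslope).ne'
  have hp : β * N * (1 - δ / (β * N)) = w := by rw [hw, mul_sub, mul_one, mul_div_cancel₀ _ hβN]
  have hsum : ∑ i, vker0 i = 0 := by
    rw [hvker0, Finset.sum_sub_distrib, Finset.sum_const, Finset.card_univ, Fintype.card_fin,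
      nsmul_eq_mul, mul_div_cancel₀ _ (right_ne_zero_of_mul hβN), sub_self]
  have horth : vinf ⬝ᵥ vker0 = 0 := by
    simp only [hvinf, dotProduct, ← Finset.mul_sum, hsum, mul_zero]
  have hvinf_ne : vinf ≠ 0 := by rintro rfl; simp at hdot_pos
  have hp0 : 1 - δ / (β * N) ≠ 0 := fun h => hvinf_ne (by rw [hvinf, h]; rfl)
  have hdecomp : ∃ c : ℝ, v0 = c • vinf + vker0 := by
    refine ⟨(∑ j, v0 j) / N / (1 - δ / (β * N)), funext fun i => ?_⟩
    simp only [hvinf, hvker0, Pi.add_apply, Pi.smul_apply, smul_eq_mul, div_mul_cancel₀ _ hp0]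
    ring
  have hclosedForm0 := NIMFA.closedForm_zero (w := w) (Φ := Φ) hvinf_ne hvker0_ne horth hdecomp
    hdot_pos hdot_lt hΥ₁ hΥ₂
  intro t ht i
  refine congrFun (ODE_solution_unique_of_locallyLipschitz
    (NIMFA.contDiff_field (fun _ => δ) (of fun _ _ => β)).locallyLipschitz
    (fun s hs => hasDerivAt_pi.2 (hsol s hs.1)) (fun s _ => ?_) (hinit.trans hclosedForm0.symm)
    ⟨ht, le_rfl⟩) i
  subst hvinf
  exact NIMFA.hasDerivAt_closedForm hw hp (by rw [hΦ, hp]) hsum s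

/-- **Theorem 4, closed-form solution of NIMFA on the complete graph.**
For the complete graph with homogeneous rates `β_ij = β > 0`, `δ_i = δ > 0` and `βN > δ`,
any NIMFA solution with initial state `v(0) ∈ [0,1]^N` satisfying `0 < v∞ᵀv(0) < ‖v∞‖₂²`
and `v_ker(0) = (I - (1/N)uuᵀ)v(0) ≠ 0` equals
`v(t) = c₁(t) v∞ + c₂(t) v_ker(0)` with
`c₁(t) = (1/2)(1 + tanh((w/2)t + Υ₁(0)))` and
`c₂(t) = Υ₂(0) e^{-Φt} sech((w/2)t + Υ₁(0))`. -/
theorem nimfa_complete_graph_solution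
    {N : ℕ} (hN : 1 ≤ N) (β δ : ℝ)
    (hβ : 0 < β) (hδ : 0 < δ) (hslope : δ < β * N)
    (vinf : Fin N → ℝ) (hvinf : vinf = fun _ => 1 - δ / (β * N))
    (v0 : Fin N → ℝ) (hv0_lb : ∀ i, 0 ≤ v0 i) (hv0_ub : ∀ i, v0 i ≤ 1)
    (hdot_pos : 0 < vinf ⬝ᵥ v0) (hdot_lt : vinf ⬝ᵥ v0 < vinf ⬝ᵥ vinf)
    (vker0 : Fin N → ℝ) (hvker0 : vker0 = fun i => v0 i - (∑ j, v0 j) / N)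
    (hvker0_ne : vker0 ≠ 0)
    (w Φ Υ₁ Υ₂ : ℝ)
    (hw : w = β * N - δ)
    (hΦ : Φ = β * N * (1 - δ / (β * N)) / 2 + δ)
    (hΥ₁ : Υ₁ = arctanh (2 * (vinf ⬝ᵥ v0) / (vinf ⬝ᵥ vinf) - 1))
    (hΥ₂ : Υ₂ = (vker0 ⬝ᵥ v0 / (vker0 ⬝ᵥ vker0)) * Real.cosh Υ₁)
    (v : ℝ → Fin N → ℝ)
    (hsol : ∀ t : ℝ, 0 ≤ t → ∀ i, HasDerivAt (fun s => v s i)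
      (-δ * v t i + (1 - v t i) * ∑ j, β * v t j) t)
    (hinit : v 0 = v0) :
    ∀ t : ℝ, 0 ≤ t → ∀ i,
      v t i = (1 / 2) * (1 + Real.tanh (w / 2 * t + Υ₁)) * vinf i
        + (Υ₂ * Real.exp (-Φ * t) * (1 / Real.cosh (w / 2 * t + Υ₁))) * vker0 i :=
  nimfa_complete_graph_solution_general β δ hδ hslope vinf hvinf v0 hdot_pos hdot_lt vker0 hvker0
    hvker0_ne w Φ Υ₁ Υ₂ hw hΦ hΥ₁ hΥ₂ v hsol hinit
end

section
/- Consider two NIMFA systems on N nodes with positive curing rates δ_i and δ̃_i, nonnegative infection rates β_ij and β̃_ij forming irreducible matrices B and B̃, and solutions v(t) and ṽ(t) with initial states v_i(0), ṽ_i(0) ∈ [0,1] for all nodes i. If δ̃_i ≤ δ_i and β̃_ij ≥ β_ij for all nodes i,j, then ṽ(0) ≥ v(0) componentwise implies ṽ(t) ≥ v(t) componentwise at every time t ≥ 0. -/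
/-!
NIMFA is cooperative on `[0,1]^N`: the `i`-th right-hand side is nondecreasing in every `v_j`,
`j ≠ i`. So at the first time a coordinate of `v` reaches `0`, or one of `ṽ` reaches `1`, or a
coordinate of `ṽ - v` reaches `0`, the vector field points back into the region; in the last
case because a smaller curing rate and larger infection rates only increase the right-hand side
of `ṽ`. Since the field may vanish at such a touching point, the boundary is moved by
`ε e^{2Ct}`, which turns the inward tendency into a strict one.
-/

open Matrix Finset

open Set

theorem HasDerivAt.nonpos_of_isMinOn_Ioc {g : ℝ → ℝ} {g' a τ : ℝ} (hg : HasDerivAt g g' τ)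
    (ha : a < τ) (hmin : IsMinOn g (Ioc a τ) τ) : g' ≤ 0 := by
  refine le_of_tendsto hg.tendsto_slope_zero_left ?_
  filter_upwards [Ioo_mem_nhdsLT (sub_neg.2 ha)] with t ⟨hat, ht0⟩
  have hmem : τ + t ∈ Ioc a τ := ⟨by linarith, by linarith⟩
  exact smul_nonpos_of_nonpos_of_nonneg (inv_nonpos.2 ht0.le) (sub_nonneg.2 (hmin hmem))

theorem exists_first_zero {ι : Type*} [Finite ι] {y : ℝ → ι → ℝ} {a b t₁ : ℝ} {i₁ : ι}
    (hy : ∀ i, ContinuousOn (fun t => y t i) (Icc a b)) (hya : ∀ i, 0 < y a i)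
    (ht₁ : t₁ ∈ Icc a b) (hi₁ : y t₁ i₁ ≤ 0) :
    ∃ τ ∈ Ioc a b, (∀ t ∈ Ico a τ, ∀ j, 0 < y t j) ∧ (∀ j, 0 ≤ y τ j) ∧ ∃ i, y τ i = 0 := by
  set S := ⋃ i, Icc a b ∩ (fun t => y t i) ⁻¹' Iic 0
  have hS : IsClosed S :=
    isClosed_iUnion_of_finite fun i =>
      (hy i).preimage_isClosed_of_isClosed isClosed_Icc isClosed_Iic
  have hSbdd : BddBelow S := ⟨a, fun t ht => by
    obtain ⟨i, hi⟩ := mem_iUnion.1 ht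
    exact hi.1.1⟩
  have hτS : sInf S ∈ S := hS.csInf_mem ⟨t₁, mem_iUnion.2 ⟨i₁, ht₁, hi₁⟩⟩ hSbdd
  obtain ⟨i, ⟨haτ, hτb⟩, hiτ⟩ := mem_iUnion.1 hτS
  have hpos : ∀ t ∈ Ico a (sInf S), ∀ j, 0 < y t j := fun t ht j => by
    by_contra! hle
    exact (csInf_le hSbdd (mem_iUnion.2 ⟨j, ⟨ht.1, ht.2.le.trans hτb⟩, hle⟩)).not_gt ht.2
  have haτ' : a < sInf S := haτ.lt_of_ne fun h => (hya i).not_ge (h ▸ hiτ)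
  have hnonneg : ∀ j, 0 ≤ y (sInf S) j := fun j => by
    have hcl : IsClosed (Icc a b ∩ (fun t => y t j) ⁻¹' Ici 0) :=
      (hy j).preimage_isClosed_of_isClosed isClosed_Icc isClosed_Ici
    have hsub : Icc a (sInf S) ⊆ Icc a b ∩ (fun t => y t j) ⁻¹' Ici 0 := by
      rw [← closure_Ico haτ'.ne]
      exact closure_minimal (fun t ht => ⟨⟨ht.1, ht.2.le.trans hτb⟩, (hpos t ht j).le⟩) hcl
    exact (hsub ⟨haτ, le_rfl⟩).2
  exact ⟨sInf S, ⟨haτ', hτb⟩, hpos, hnonneg, i, le_antisymm hiτ (hnonneg i)⟩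

theorem nonneg_of_first_touch {ι : Type*} [Finite ι] {x f : ℝ → ι → ℝ} {C : ℝ} (hC : 0 < C)
    (hx : ∀ t, 0 ≤ t → ∀ i, HasDerivAt (fun s => x s i) (f t i) t) (hx0 : ∀ i, 0 ≤ x 0 i)
    (hf : ∀ t, 0 ≤ t → ∀ ε ∈ Ioc (0 : ℝ) 1, ∀ i,
      x t i = -ε → (∀ j, -ε ≤ x t j) → -C * ε < f t i) :
    ∀ t, 0 ≤ t → ∀ i, 0 ≤ x t i := by
  intro T hT i₀
  by_contra! hneg
  set ε := min 1 (-x T i₀ / 2) / Real.exp (2 * C * T)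
  have hεpos : 0 < ε := div_pos (lt_min one_pos (by linarith)) (Real.exp_pos _)
  have hεT : ε * Real.exp (2 * C * T) = min 1 (-x T i₀ / 2) :=
    div_mul_cancel₀ _ (Real.exp_pos _).ne'
  set y : ℝ → ι → ℝ := fun t i => x t i + ε * Real.exp (2 * C * t)
  have hy : ∀ t, 0 ≤ t → ∀ i,
      HasDerivAt (fun s => y s i) (f t i + 2 * C * (ε * Real.exp (2 * C * t))) t := by
    intro t ht i
    have hexp : HasDerivAt (fun s => ε * Real.exp (2 * C * s))
        (ε * (Real.exp (2 * C * t) * (2 * C))) t :=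
      (((hasDerivAt_id t).const_mul (2 * C)).exp.congr_deriv (by simp)).const_mul ε
    exact ((hx t ht i).add hexp).congr_deriv (by ring)
  obtain ⟨τ, ⟨hτ0, hτT⟩, hpos, hnonneg, i, hyi⟩ := exists_first_zero (y := y) (i₁ := i₀)
    (fun i t ht => (hy t ht.1 i).continuousAt.continuousWithinAt)
    (fun i => by simpa [y] using add_pos_of_nonneg_of_pos (hx0 i) hεpos) ⟨hT, le_rfl⟩
    (by linarith [min_le_right 1 (-x T i₀ / 2)])
  set ε' := ε * Real.exp (2 * C * τ)
  have hε'pos : 0 < ε' := by positivity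
  have hε'le : ε' ≤ 1 := by
    calc ε' ≤ ε * Real.exp (2 * C * T) :=
          mul_le_mul_of_nonneg_left (Real.exp_le_exp.2 (by nlinarith)) hεpos.le
      _ ≤ 1 := hεT ▸ min_le_left _ _
  have hf_τ : -C * ε' < f τ i :=
    hf τ hτ0.le ε' ⟨hε'pos, hε'le⟩ i (by linarith [hyi]) fun j => by linarith [hnonneg j]
  have hmin : IsMinOn (fun s => y s i) (Ioc 0 τ) τ := isMinOn_iff.2 fun t ht => by
    rcases ht.2.lt_or_eq with htτ | rfl
    · simpa [hyi] using (hpos t ⟨ht.1.le, htτ⟩ i).le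
    · exact le_rfl
  -- `y_i` reaches its first zero from above, yet its derivative there is at least `C ε' > 0`.
  have := (hy τ hτ0.le i).nonpos_of_isMinOn_Ioc hτ0 hmin
  nlinarith

theorem neg_mul_sum_sum_le_sum_mul {ι : Type*} [Fintype ι] {β : Matrix ι ι ℝ}
    (hβ : ∀ i j, 0 ≤ β i j) {w : ι → ℝ} {ε : ℝ} (hε : 0 ≤ ε) (hw : ∀ j, -ε ≤ w j) (i : ι) :
    -(ε * ∑ k, ∑ j, β k j) ≤ ∑ j, β i j * w j :=
  calc -(ε * ∑ k, ∑ j, β k j) ≤ -(ε * ∑ j, β i j) :=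
        neg_le_neg <| mul_le_mul_of_nonneg_left (single_le_sum (f := fun k => ∑ j, β k j)
          (fun k _ => sum_nonneg fun j _ => hβ k j) (mem_univ i)) hε
    _ = ∑ j, β i j * -ε := by rw [← sum_mul]; ring
    _ ≤ ∑ j, β i j * w j := sum_le_sum fun j _ => mul_le_mul_of_nonneg_left (hw j) (hβ i j)

def IsNimfaSolution {ι : Type*} [Fintype ι] (δ : ι → ℝ) (β : Matrix ι ι ℝ)
    (v : ℝ → ι → ℝ) : Prop :=
  ∀ t : ℝ, 0 ≤ t → ∀ i, HasDerivAt (fun s => v s i)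
    (-δ i * v t i + (1 - v t i) * ∑ j, β i j * v t j) t

namespace IsNimfaSolution

variable {ι : Type*} [Fintype ι] {δ : ι → ℝ} {β : Matrix ι ι ℝ} {v : ℝ → ι → ℝ}

theorem nonneg (hv : IsNimfaSolution δ β v) (hβ : ∀ i j, 0 ≤ β i j) (hv0 : ∀ i, 0 ≤ v 0 i) :
    ∀ t, 0 ≤ t → ∀ i, 0 ≤ v t i := by
  set R := ∑ k, ∑ j, β k j
  have hR : 0 ≤ R := sum_nonneg fun k _ => sum_nonneg fun j _ => hβ k j
  set D := ∑ k, |δ k|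
  refine nonneg_of_first_touch (C := 1 + D + 2 * R) (by positivity) hv hv0 ?_
  intro t _ ε ⟨hε, hε1⟩ i hvi hmin
  have hS := neg_mul_sum_sum_le_sum_mul hβ hε.le hmin i
  have hδi : -δ i ≤ D := (neg_le_abs _).trans
    (single_le_sum (f := fun k => |δ k|) (fun k _ => abs_nonneg _) (mem_univ i))
  rw [hvi]
  nlinarith [mul_le_mul_of_nonneg_left hS (by linarith : (0 : ℝ) ≤ 1 + ε),
    mul_le_mul_of_nonneg_left hε1 (mul_nonneg hε.le hR)]

theorem mem_Icc (hv : IsNimfaSolution δ β v) (hδ : ∀ i, 0 ≤ δ i) (hβ : ∀ i j, 0 ≤ β i j)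
    (hv0 : ∀ i, v 0 i ∈ Set.Icc 0 1) : ∀ t, 0 ≤ t → ∀ i, v t i ∈ Set.Icc 0 1 := by
  have hv_nonneg := hv.nonneg hβ fun i => (hv0 i).1
  have hle := nonneg_of_first_touch (x := fun t i => 1 - v t i) one_pos
    (fun t ht i => (hv t ht i).const_sub 1) (fun i => sub_nonneg.2 (hv0 i).2) ?_
  · exact fun t ht i => ⟨hv_nonneg t ht i, sub_nonneg.1 (hle t ht i)⟩
  intro t ht ε ⟨hε, _⟩ i hvi _
  have hS : 0 ≤ ∑ j, β i j * v t j :=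
    sum_nonneg fun j _ => mul_nonneg (hβ i j) (hv_nonneg t ht j)
  have hvi' : v t i = 1 + ε := by linarith
  rw [hvi']
  nlinarith [hδ i]

theorem le_of_initial_le {δt : ι → ℝ} {βt : Matrix ι ι ℝ} {vt : ℝ → ι → ℝ}
    (hv : IsNimfaSolution δ β v) (hvt : IsNimfaSolution δt βt vt)
    (hδt : ∀ i, 0 ≤ δt i) (hβ : ∀ i j, 0 ≤ β i j) (hβt : ∀ i j, 0 ≤ βt i j)
    (hδ_le : ∀ i, δt i ≤ δ i) (hβ_le : ∀ i j, β i j ≤ βt i j)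
    (hv_nonneg : ∀ t, 0 ≤ t → ∀ i, 0 ≤ v t i)
    (hvt_mem : ∀ t, 0 ≤ t → ∀ i, vt t i ∈ Set.Icc 0 1)
    (h0 : ∀ i, v 0 i ≤ vt 0 i) : ∀ t, 0 ≤ t → ∀ i, v t i ≤ vt t i := by
  set R := ∑ k, ∑ j, βt k j
  have hR : 0 ≤ R := sum_nonneg fun k _ => sum_nonneg fun j _ => hβt k j
  have hdiff := nonneg_of_first_touch (x := fun t i => vt t i - v t i) (C := 1 + R)
    (by positivity) (fun t ht i => (hvt t ht i).sub (hv t ht i)) (fun i => sub_nonneg.2 (h0 i)) ?_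
  · exact fun t ht i => sub_nonneg.1 (hdiff t ht i)
  intro t ht ε ⟨hε, _⟩ i hwi hw
  have hA := neg_mul_sum_sum_le_sum_mul hβt hε.le hw i
  simp only [mul_sub, sum_sub_distrib] at hA
  have hβv : ∑ j, β i j * v t j ≤ ∑ j, βt i j * v t j :=
    sum_le_sum fun j _ => mul_le_mul_of_nonneg_right (hβ_le i j) (hv_nonneg t ht j)
  have hβv_nonneg : 0 ≤ ∑ j, β i j * v t j :=
    sum_nonneg fun j _ => mul_nonneg (hβ i j) (hv_nonneg t ht j)
  obtain ⟨hvt0, hvt1⟩ := hvt_mem t ht i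
  have hvi : v t i = vt t i + ε := by linarith
  rw [hvi]
  nlinarith [mul_le_mul_of_nonneg_left hA (sub_nonneg.2 hvt1),
    mul_le_mul_of_nonneg_left hβv (sub_nonneg.2 hvt1),
    mul_nonneg (sub_nonneg.2 (hδ_le i)) (hv_nonneg t ht i), mul_nonneg hε.le hβv_nonneg,
    mul_nonneg (hδt i) hε.le, mul_le_mul_of_nonneg_left hvt0 (mul_nonneg hε.le hR)]

end IsNimfaSolution

theorem nimfa_monotone_comparison_general
    {N : ℕ} (β βt : Matrix (Fin N) (Fin N) ℝ) (δ δt : Fin N → ℝ)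
    (hδt_pos : ∀ i, 0 < δt i)
    (hβ_nonneg : ∀ i j, 0 ≤ β i j) (hβt_nonneg : ∀ i j, 0 ≤ βt i j)
    (v vt : ℝ → Fin N → ℝ)
    (hsol : ∀ t : ℝ, 0 ≤ t → ∀ i, HasDerivAt (fun s => v s i)
      (-δ i * v t i + (1 - v t i) * ∑ j, β i j * v t j) t)
    (hsolt : ∀ t : ℝ, 0 ≤ t → ∀ i, HasDerivAt (fun s => vt s i)
      (-δt i * vt t i + (1 - vt t i) * ∑ j, βt i j * vt t j) t)
    (hinit01 : ∀ i, v 0 i ∈ Set.Icc (0 : ℝ) 1)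
    (hinitt01 : ∀ i, vt 0 i ∈ Set.Icc (0 : ℝ) 1)
    (hδ_le : ∀ i, δt i ≤ δ i)
    (hβ_ge : ∀ i j, β i j ≤ βt i j)
    (hinit_le : ∀ i, v 0 i ≤ vt 0 i) :
    ∀ t : ℝ, 0 ≤ t → ∀ i, v t i ≤ vt t i := by
  have hv : IsNimfaSolution δ β v := hsol
  have hvt : IsNimfaSolution δt βt vt := hsolt
  have hδt : ∀ i, 0 ≤ δt i := fun i => (hδt_pos i).le
  exact hv.le_of_initial_le hvt hδt hβ_nonneg hβt_nonneg hδ_le hβ_ge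
    (hv.nonneg hβ_nonneg fun i => (hinit01 i).1) (hvt.mem_Icc hδt hβt_nonneg hinitt01) hinit_le

/-- **Theorem 5, monotonicity of NIMFA in the spreading rates.**
Consider two NIMFA systems with positive curing rates `δ_i`, `δ̃_i`, nonnegative irreducible
infection rate matrices `β`, `β̃`, and solutions `v(t)`, `ṽ(t)` with initial states in
`[0,1]`. If `δ̃_i ≤ δ_i` and `β̃_ij ≥ β_ij` for all `i,j`, then `ṽ(0) ≥ v(0)` implies
`ṽ(t) ≥ v(t)` at every time `t ≥ 0`. -/
theorem nimfa_monotone_comparison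
    {N : ℕ} (β βt : Matrix (Fin N) (Fin N) ℝ) (δ δt : Fin N → ℝ)
    (hδ_pos : ∀ i, 0 < δ i) (hδt_pos : ∀ i, 0 < δt i)
    (hβ_nonneg : ∀ i j, 0 ≤ β i j) (hβt_nonneg : ∀ i j, 0 ≤ βt i j)
    (hβ_irr : MatIrreducible β) (hβt_irr : MatIrreducible βt)
    (v vt : ℝ → Fin N → ℝ)
    (hsol : ∀ t : ℝ, 0 ≤ t → ∀ i, HasDerivAt (fun s => v s i)
      (-δ i * v t i + (1 - v t i) * ∑ j, β i j * v t j) t)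
    (hsolt : ∀ t : ℝ, 0 ≤ t → ∀ i, HasDerivAt (fun s => vt s i)
      (-δt i * vt t i + (1 - vt t i) * ∑ j, βt i j * vt t j) t)
    (hinit01 : ∀ i, v 0 i ∈ Set.Icc (0 : ℝ) 1)
    (hinitt01 : ∀ i, vt 0 i ∈ Set.Icc (0 : ℝ) 1)
    (hδ_le : ∀ i, δt i ≤ δ i)
    (hβ_ge : ∀ i j, β i j ≤ βt i j)
    (hinit_le : ∀ i, v 0 i ≤ vt 0 i) :
    ∀ t : ℝ, 0 ≤ t → ∀ i, v t i ≤ vt t i :=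
  nimfa_monotone_comparison_general β βt δ δt hδt_pos hβ_nonneg hβt_nonneg v vt hsol hsolt hinit01
    hinitt01 hδ_le hβ_ge hinit_le
end

section
/- Let V ⊆ ℝ^N be a linear subspace that is an invariant set of NIMFA and suppose S v ∈ V for every v ∈ V. Then for every v ∈ V and every w ∈ ℝ^N orthogonal to V, it holds that wᵀ diag(v) B v = 0 and wᵀ B v = 0; in particular B V ⊆ V, i.e., V is an invariant subspace of the infection rate matrix B. -/
open Matrix Finset

/-!
Adding the curing term `S v ∈ V` to the NIMFA field leaves `diag(u - v) B v = B v - diag(v) B v`,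
the sum of a part odd in `v` and a part even in `v`. Since `V` is closed under `v ↦ -v`, both
parts lie in `V` separately; orthogonality of `w` to `V` then gives the two relations.
-/

theorem Submodule.odd_mem_and_even_mem {R M : Type*} [Ring R] [Invertible (2 : R)]
    [AddCommGroup M] [Module R M] (p : Submodule R M) {f g : M → M}
    (hf : ∀ x, f (-x) = -f x) (hg : ∀ x, g (-x) = g x) (h : ∀ x ∈ p, f x + g x ∈ p)
    {x : M} (hx : x ∈ p) : f x ∈ p ∧ g x ∈ p := by
  have hsum : f x + g x ∈ p := h x hx
  have hg_mem : g x ∈ p := by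
    have hneg : -f x + g x ∈ p := by simpa [hf, hg] using h (-x) (p.neg_mem hx)
    have htwo : (2 : R) • g x ∈ p := by
      convert p.add_mem hsum hneg using 1
      rw [two_smul]
      abel
    simpa [smul_smul] using p.smul_mem (⅟2 : R) htwo
  exact ⟨by simpa using p.sub_mem hsum hg_mem, hg_mem⟩

theorem nimfa_field_add_curing {N : ℕ} (B : Matrix (Fin N) (Fin N) ℝ) (δ v : Fin N → ℝ) :
    ((fun i => -δ i * v i + (1 - v i) * ∑ j, B i j * v j) + fun i => δ i * v i) =
      B *ᵥ v + -(v * B *ᵥ v) := by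
  funext i
  simp only [Pi.add_apply, Pi.neg_apply, Pi.mul_apply, mulVec, dotProduct]
  ring

theorem nimfa_invariant_set_B_invariant_general
    {N : ℕ} (B : Matrix (Fin N) (Fin N) ℝ) (δ : Fin N → ℝ)
    (V : Submodule ℝ (Fin N → ℝ))
    (hSV : ∀ v ∈ V, (fun i => δ i * v i) ∈ V)
    (hinv : ∀ v ∈ V, (fun i => -δ i * v i + (1 - v i) * ∑ j, B i j * v j) ∈ V) :
    (∀ v ∈ V, ∀ w : Fin N → ℝ, (∀ x ∈ V, w ⬝ᵥ x = 0) →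
      w ⬝ᵥ (fun i => v i * B.mulVec v i) = 0 ∧ w ⬝ᵥ B.mulVec v = 0) ∧
    (∀ v ∈ V, B.mulVec v ∈ V) := by
  have hsplit : ∀ v ∈ V, B *ᵥ v ∈ V ∧ -(v * B *ᵥ v) ∈ V :=
    fun v hv => V.odd_mem_and_even_mem (f := (B *ᵥ ·)) (g := fun v => -(v * B *ᵥ v))
      (fun v => mulVec_neg v B) (fun v => by simp [mulVec_neg])
      (fun v hv => nimfa_field_add_curing B δ v ▸ V.add_mem (hinv v hv) (hSV v hv)) hv
  have hB : ∀ v ∈ V, B *ᵥ v ∈ V := fun v hv => (hsplit v hv).1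
  have hdiag : ∀ v ∈ V, v * B *ᵥ v ∈ V := fun v hv => neg_mem_iff.mp (hsplit v hv).2
  exact ⟨fun v hv w hw => ⟨hw _ (hdiag v hv), hw _ (hB v hv)⟩, hB⟩

/-- **orthogonality relations for invariant sets; part of the proof of
Lemma 1.** If the linear subspace `V` is an invariant set of NIMFA and `S V ⊆ V`, then for
every `v ∈ V` and every `w` orthogonal to `V` it holds that `wᵀ diag(v) B v = 0` and
`wᵀ B v = 0`; in particular `B V ⊆ V`, i.e. `V` is an invariant subspace of `B`. -/
theorem nimfa_invariant_set_B_invariant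
    {N : ℕ} (B : Matrix (Fin N) (Fin N) ℝ) (δ : Fin N → ℝ)
    (hδ_pos : ∀ i, 0 < δ i)
    (hB_nonneg : ∀ i j, 0 ≤ B i j)
    (V : Submodule ℝ (Fin N → ℝ))
    (hSV : ∀ v ∈ V, (fun i => δ i * v i) ∈ V)
    (hinv : ∀ v ∈ V, (fun i => -δ i * v i + (1 - v i) * ∑ j, B i j * v j) ∈ V) :
    (∀ v ∈ V, ∀ w : Fin N → ℝ, (∀ x ∈ V, w ⬝ᵥ x = 0) →
      w ⬝ᵥ (fun i => v i * B.mulVec v i) = 0 ∧ w ⬝ᵥ B.mulVec v = 0) ∧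
    (∀ v ∈ V, B.mulVec v ∈ V) :=
  nimfa_invariant_set_B_invariant_general B δ V hSV hinv
end

section
/- Let π = {N_1,...,N_r} be a partition of {1,...,N}, let B be a symmetric N×N matrix with β_ij = b_{pl} whenever i ∈ N_p and j ∈ N_l (block-constant infection rates), and let S = diag(δ_1,...,δ_N) with δ_i = δ_j whenever i,j lie in the same cell. Let V_{≠0} = span{y_1,...,y_r}, where y_l are the normalized indicator vectors of π. Then for every ṽ ∈ V_{≠0}, the vector B ṽ - S ṽ - diag(ṽ) B ṽ lies in V_{≠0}. -/
open Matrix Finset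

/-! `V_{≠0}` is exactly the space of vectors constant on the cells of `c` (the cell indicators
are multiples of the `y_l`). Block-constant rows make `B v` constant on cells for every `v`, and
products of cell-constant vectors are cell-constant, so each term of the field stays in `V_{≠0}`. -/

def cellConst (R : Type*) [Semiring R] {α β : Type*} (c : α → β) : Submodule R (α → R) where
  carrier := {x | x.FactorsThrough c}
  zero_mem' _ _ _ := rfl
  add_mem' hx hy i j h := by simp only [Pi.add_apply, hx h, hy h]
  smul_mem' _ _ hx i j h := by simp only [Pi.smul_apply, hx h]

lemma mem_cellConst {R : Type*} [Semiring R] {α β : Type*} {c : α → β} {x : α → R} :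
    x ∈ cellConst R c ↔ x.FactorsThrough c :=
  Iff.rfl

section indVec

variable {N r : ℕ} (c : Fin N → Fin r)

lemma sqrt_card_smul_indVec (l : Fin r) :
    Real.sqrt (#{k | c k = l} : ℝ) • indVec c l = fun i => if c i = l then 1 else 0 := by
  funext i
  by_cases hi : c i = l
  · have hcard : (0 : ℝ) < #{k | c k = l} :=
      Nat.cast_pos.mpr (Finset.card_pos.mpr ⟨i, by simp [hi]⟩)
    simp only [Pi.smul_apply, indVec, hi, if_true, smul_eq_mul]
    field_simp
  · simp [indVec, hi]

lemma comp_mem_span_indVec (g : Fin r → ℝ) :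
    g ∘ c ∈ Submodule.span ℝ (Set.range (indVec c)) := by
  have hsum : g ∘ c = ∑ l, (g l * Real.sqrt (#{k | c k = l} : ℝ)) • indVec c l := by
    simp only [mul_smul, sqrt_card_smul_indVec]
    funext i
    simp [Finset.sum_apply]
  rw [hsum]
  exact Submodule.sum_mem _ fun l _ => Submodule.smul_mem _ _ (Submodule.subset_span ⟨l, rfl⟩)

theorem span_indVec_eq_cellConst :
    Submodule.span ℝ (Set.range (indVec c)) = cellConst ℝ c := by
  apply le_antisymm
  · rw [Submodule.span_le]
    rintro _ ⟨l, rfl⟩ i j h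
    simp only [indVec, h]
  · intro x hx
    have hx_eq : Function.extend c x 0 ∘ c = x := funext ((mem_cellConst.mp hx).extend_apply 0)
    exact hx_eq ▸ comp_mem_span_indVec c _

end indVec

lemma mulVec_factorsThrough_of_block {α β R : Type*} [Fintype α] [NonUnitalNonAssocSemiring R]
    {B : Matrix α α R} {c : α → β} {b : β → β → R} (hblock : ∀ i j, B i j = b (c i) (c j))
    (v : α → R) : (B *ᵥ v).FactorsThrough c := by
  intro i j h
  simp only [mulVec, dotProduct, hblock, h]

theorem nimfa_field_tangent_to_Vneq0_general
    {N r : ℕ} (B : Matrix (Fin N) (Fin N) ℝ) (δ : Fin N → ℝ)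
    (c : Fin N → Fin r)
    (b : Fin r → Fin r → ℝ)
    (hblock : ∀ i j, B i j = b (c i) (c j))
    (hδ_cell : ∀ i j, c i = c j → δ i = δ j)
    (vt : Fin N → ℝ)
    (hvt : vt ∈ Submodule.span ℝ (Set.range (indVec c))) :
    (fun i => B.mulVec vt i - δ i * vt i - vt i * B.mulVec vt i)
      ∈ Submodule.span ℝ (Set.range (indVec c)) := by
  rw [span_indVec_eq_cellConst] at hvt ⊢
  have hBv := mulVec_factorsThrough_of_block hblock vt
  intro i j h
  simp only [hBv h, hvt h, hδ_cell i j h]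

/-- **Lemma 7, tangency of the NIMFA field to `V_{≠0}`.**
For block-constant infection rates `β_ij = b_{c(i) c(j)}` with `B` symmetric, and curing rates
constant on cells, the vector `B ṽ - S ṽ - diag(ṽ) B ṽ` lies in
`V_{≠0} = span{y_1,...,y_r}` for every `ṽ ∈ V_{≠0}`. -/
theorem nimfa_field_tangent_to_Vneq0
    {N r : ℕ} (B : Matrix (Fin N) (Fin N) ℝ) (δ : Fin N → ℝ)
    (c : Fin N → Fin r) (hsurj : Function.Surjective c)
    (b : Fin r → Fin r → ℝ)
    (hblock : ∀ i j, B i j = b (c i) (c j))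
    (hB_symm : B.IsSymm)
    (hδ_cell : ∀ i j, c i = c j → δ i = δ j)
    (vt : Fin N → ℝ)
    (hvt : vt ∈ Submodule.span ℝ (Set.range (indVec c))) :
    (fun i => B.mulVec vt i - δ i * vt i - vt i * B.mulVec vt i)
      ∈ Submodule.span ℝ (Set.range (indVec c)) :=
  nimfa_field_tangent_to_Vneq0_general B δ c b hblock hδ_cell vt hvt
end

section
/- Let π = {N_1,...,N_r} be a partition of {1,...,N}, let B be a symmetric N×N matrix with β_ij = b_{pl} whenever i ∈ N_p and j ∈ N_l (block-constant infection rates), and let S = diag(δ_1,...,δ_N) with δ_i = δ_j whenever i,j lie in the same cell. Let V_{≠0} = span{y_1,...,y_r}, where y_l are the normalized indicator vectors of π, and suppose ker(B) equals the orthogonal complement of V_{≠0}. Then for every ṽ ∈ V_{≠0} and every v_ker ∈ ker(B), the vector S v_ker + diag(v_ker) B ṽ lies in ker(B). -/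
open Matrix Finset

/-!
A kernel vector `v` is orthogonal to every `y_l`, so it sums to zero on every cell. The vector
`δ + B ṽ` is constant on cells (`B` has block-constant rows), and so is every row of `B`; hence
each entry of `B (diag(δ + B ṽ) v)` is a combination of the cell sums of `v`, i.e. zero.
-/

theorem sum_mul_eq_zero_of_fiber_sums_eq_zero {ι κ R : Type*} [Fintype ι] [DecidableEq κ]
    [CommSemiring R] (c : ι → κ) {g v : ι → R}
    (hg : ∀ i j, c i = c j → g i = g j)
    (hv : ∀ l, ∑ j ∈ univ.filter (fun j => c j = l), v j = 0) :
    ∑ j, g j * v j = 0 := by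
  rw [← Finset.sum_fiberwise_of_maps_to fun j _ => mem_image_of_mem c (mem_univ j)]
  refine Finset.sum_eq_zero fun l _ => ?_
  rcases (univ.filter (fun j => c j = l)).eq_empty_or_nonempty with hempty | ⟨j₀, hj₀⟩
  · rw [hempty, Finset.sum_empty]
  · have hconst : ∀ j ∈ univ.filter (fun j => c j = l), g j * v j = g j₀ * v j := by
      intro j hj
      rw [hg j j₀ ((mem_filter.mp hj).2.trans (mem_filter.mp hj₀).2.symm)]
    rw [Finset.sum_congr rfl hconst, ← Finset.mul_sum, hv l, mul_zero]

theorem Matrix.mulVec_apply_eq_of_block_const {ι κ R : Type*} [Fintype ι]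
    [NonUnitalNonAssocSemiring R]
    {B : Matrix ι ι R} {c : ι → κ} {b : κ → κ → R} (hblock : ∀ i j, B i j = b (c i) (c j))
    (x : ι → R) {i i' : ι} (hc : c i = c i') : (B *ᵥ x) i = (B *ᵥ x) i' := by
  simp only [mulVec, dotProduct, hblock, hc]

theorem dotProduct_indVec {N r : ℕ} (c : Fin N → Fin r) (w : Fin N → ℝ) (l : Fin r) :
    w ⬝ᵥ indVec c l =
      (∑ j ∈ univ.filter (fun j => c j = l), w j) /
        Real.sqrt ((univ.filter (fun k => c k = l)).card) := by
  rw [div_eq_mul_one_div, Finset.sum_mul]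
  simp only [dotProduct, indVec, mul_ite, mul_zero, ← Finset.sum_filter]

theorem sum_cell_eq_zero_of_dotProduct_indVec_eq_zero {N r : ℕ} {c : Fin N → Fin r}
    {w : Fin N → ℝ} {l : Fin r} (h : w ⬝ᵥ indVec c l = 0) :
    ∑ j ∈ univ.filter (fun j => c j = l), w j = 0 := by
  rw [dotProduct_indVec, div_eq_zero_iff] at h
  rcases h with hsum | hsqrt
  · exact hsum
  · rw [Real.sqrt_eq_zero (Nat.cast_nonneg _), Nat.cast_eq_zero, Finset.card_eq_zero] at hsqrt
    rw [hsqrt, Finset.sum_empty]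

theorem nimfa_field_tangent_to_kernel_general
    {N r : ℕ} (B : Matrix (Fin N) (Fin N) ℝ) (δ : Fin N → ℝ)
    (c : Fin N → Fin r)
    (b : Fin r → Fin r → ℝ)
    (hblock : ∀ i j, B i j = b (c i) (c j))
    (hδ_cell : ∀ i j, c i = c j → δ i = δ j)
    (hker : ∀ w : Fin N → ℝ,
      B.mulVec w = 0 ↔ ∀ x ∈ Submodule.span ℝ (Set.range (indVec c)), w ⬝ᵥ x = 0)
    (vt : Fin N → ℝ)
    (vker : Fin N → ℝ)
    (hvker : B.mulVec vker = 0) :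
    B.mulVec (fun i => δ i * vker i + vker i * B.mulVec vt i) = 0 := by
  have hcells : ∀ l, ∑ j ∈ univ.filter (fun j => c j = l), vker j = 0 := fun l =>
    sum_cell_eq_zero_of_dotProduct_indVec_eq_zero
      ((hker vker).mp hvker _ (Submodule.subset_span ⟨l, rfl⟩))
  funext i
  calc (B *ᵥ fun j => δ j * vker j + vker j * (B *ᵥ vt) j) i
      = ∑ j, (B i j * (δ j + (B *ᵥ vt) j)) * vker j := by
        simp only [mulVec, dotProduct]
        exact Finset.sum_congr rfl fun j _ => by ring
    _ = 0 := sum_mul_eq_zero_of_fiber_sums_eq_zero c (fun j j' hc => by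
        rw [hblock, hblock, hc, hδ_cell j j' hc, mulVec_apply_eq_of_block_const hblock vt hc])
        hcells

/-- **Lemma 8, tangency of the NIMFA field to `ker(B)`.**
For block-constant infection rates `β_ij = b_{c(i) c(j)}` with `B` symmetric, curing rates
constant on cells, and `ker(B)` equal to the orthogonal complement of
`V_{≠0} = span{y_1,...,y_r}`, the vector `S v_ker + diag(v_ker) B ṽ` lies in `ker(B)` for
every `ṽ ∈ V_{≠0}` and every `v_ker ∈ ker(B)`. -/
theorem nimfa_field_tangent_to_kernel
    {N r : ℕ} (B : Matrix (Fin N) (Fin N) ℝ) (δ : Fin N → ℝ)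
    (c : Fin N → Fin r) (hsurj : Function.Surjective c)
    (b : Fin r → Fin r → ℝ)
    (hblock : ∀ i j, B i j = b (c i) (c j))
    (hB_symm : B.IsSymm)
    (hδ_cell : ∀ i j, c i = c j → δ i = δ j)
    (hker : ∀ w : Fin N → ℝ,
      B.mulVec w = 0 ↔ ∀ x ∈ Submodule.span ℝ (Set.range (indVec c)), w ⬝ᵥ x = 0)
    (vt : Fin N → ℝ)
    (hvt : vt ∈ Submodule.span ℝ (Set.range (indVec c)))
    (vker : Fin N → ℝ)
    (hvker : B.mulVec vker = 0) :
    B.mulVec (fun i => δ i * vker i + vker i * B.mulVec vt i) = 0 :=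
  nimfa_field_tangent_to_kernel_general B δ c b hblock hδ_cell hker vt vker hvker
end

section
/- Let β, δ > 0 and N ≥ 1 with βN > δ, and set v∞ = 1 - δ/(βN), w = βN - δ and Φ = βN v∞/2 + δ. For any constants a ∈ ℝ and c₀ ∈ ℝ, the function c₂(t) = c₀ cosh(a) e^{-Φ t} sech((w/2) t + a) satisfies c₂(0) = c₀ and the linear time-varying ODE dc₂(t)/dt = -δ c₂(t) - (βN v∞/2)(1 + tanh((w/2) t + a)) c₂(t) for all t ≥ 0. -/
/-! Since `(1 / cosh)' = -tanh * (1 / cosh)`, the logarithmic derivative of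
`e^{-Φ t} sech(k t + a)` is `-Φ - k tanh(k t + a)`. With `k = w / 2` and `w = βN v∞`
this is `-δ - (βN v∞ / 2)(1 + tanh(k t + a))`, and the factor `cosh a` normalises the value at `t = 0`. -/

open Real

theorem Real.hasDerivAt_one_div_cosh (x : ℝ) :
    HasDerivAt (fun x => 1 / cosh x) (-tanh x * (1 / cosh x)) x := by
  have h := (hasDerivAt_cosh x).inv (cosh_pos x).ne'
  simp only [← one_div] at h
  refine h.congr_deriv ?_
  rw [tanh_eq_sinh_div_cosh]
  field_simp

theorem Real.hasDerivAt_mul_exp_mul_div_cosh_affine (C μ k a t : ℝ) :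
    HasDerivAt (fun t => C * exp (μ * t) * (1 / cosh (k * t + a)))
      ((μ - k * tanh (k * t + a)) * (C * exp (μ * t) * (1 / cosh (k * t + a)))) t := by
  have hexp : HasDerivAt (fun t => C * exp (μ * t)) (C * (exp (μ * t) * (μ * 1))) t :=
    (((hasDerivAt_id' t).const_mul μ).exp).const_mul C
  have hsech : HasDerivAt (fun t => 1 / cosh (k * t + a))
      (-tanh (k * t + a) * (1 / cosh (k * t + a)) * (k * 1)) t :=
    (hasDerivAt_one_div_cosh (k * t + a)).comp (h := fun t => k * t + a) t
      (((hasDerivAt_id' t).const_mul k).add_const a)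
  exact (hexp.mul hsech).congr_deriv (by ring)

theorem kernel_coefficient_closed_form_general
    (β δ : ℝ) (N : ℕ) (hδ : 0 < δ)
    (hslope : δ < β * N)
    (vinf w Φ : ℝ)
    (hvinf : vinf = 1 - δ / (β * N))
    (hw : w = β * N - δ)
    (hΦ : Φ = β * N * vinf / 2 + δ)
    (a c₀ : ℝ)
    (c₂ : ℝ → ℝ)
    (hc₂ : c₂ = fun t =>
      c₀ * Real.cosh a * Real.exp (-Φ * t) * (1 / Real.cosh (w / 2 * t + a))) :
    c₂ 0 = c₀ ∧
    ∀ t : ℝ, 0 ≤ t → HasDerivAt c₂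
      (-δ * c₂ t - β * N * vinf / 2 * (1 + Real.tanh (w / 2 * t + a)) * c₂ t) t := by
  have hw_eq : β * N * vinf = w := by
    rw [hvinf, hw, mul_sub, mul_one, mul_div_cancel₀ _ (hδ.trans hslope).ne']
  subst hc₂
  refine ⟨by simp [(cosh_pos a).ne'], fun t _ => ?_⟩
  refine (hasDerivAt_mul_exp_mul_div_cosh_affine _ (-Φ) (w / 2) a t).congr_deriv ?_
  rw [hΦ, hw_eq]
  ring

/-- **closed-form solution of the kernel coefficient ODE on the complete
graph.** For `β, δ > 0`, `N ≥ 1` with `βN > δ`, set `v∞ = 1 - δ/(βN)`, `w = βN - δ` and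
`Φ = βN v∞/2 + δ`. For any constants `a, c₀ ∈ ℝ`, the function
`c₂(t) = c₀ cosh(a) e^{-Φt} sech((w/2)t + a)` satisfies `c₂(0) = c₀` and
`dc₂/dt = -δ c₂ - (βN v∞/2)(1 + tanh((w/2)t + a)) c₂` for all `t ≥ 0`. -/
theorem kernel_coefficient_closed_form
    (β δ : ℝ) (N : ℕ) (hβ : 0 < β) (hδ : 0 < δ) (hN : 1 ≤ N)
    (hslope : δ < β * N)
    (vinf w Φ : ℝ)
    (hvinf : vinf = 1 - δ / (β * N))
    (hw : w = β * N - δ)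
    (hΦ : Φ = β * N * vinf / 2 + δ)
    (a c₀ : ℝ)
    (c₂ : ℝ → ℝ)
    (hc₂ : c₂ = fun t =>
      c₀ * Real.cosh a * Real.exp (-Φ * t) * (1 / Real.cosh (w / 2 * t + a))) :
    c₂ 0 = c₀ ∧
    ∀ t : ℝ, 0 ≤ t → HasDerivAt c₂
      (-δ * c₂ t - β * N * vinf / 2 * (1 + Real.tanh (w / 2 * t + a)) * c₂ t) t :=
  kernel_coefficient_closed_form_general β δ N hδ hslope vinf w Φ hvinf hw hΦ a c₀ c₂ hc₂
end
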